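/- arXiv:1701.01896 — 5 statements merged into one kernel-verified Lean document; each statement's English description precedes it below -/
import Mathlib

section
/- Let H be an N×N positive-definite Hermitian matrix over ℂ with spectral decomposition H = V Λ Vᴴ, where V is unitary and Λ = diag(λ₁, …, λ_N) with each λ_n > 0. Fix an integer t ≥ 0 and suppose H^t = Q R with Q unitary and R upper triangular with strictly positive real diagonal entries. If the last row of V is nonzero (i.e. ∑_{n=1}^N |V_{Nn}|² = 1 > 0), then the (N,N) entry of R satisfies R_{NN} = (∑_{n=1}^N λ_n^{−2t} |V_{Nn}|²)^{−1/2}, and the last row of U := Qᴴ V satisfies U_{Nn} = R_{NN} · V_{Nn} · λ_n^{−t} for every 1 ≤ n ≤ N. -/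
/-!
Since `H ^ t = V Λᵗ Vᴴ` and `R = Qᴴ H ^ t`, we get `R V = U Λᵗ` with `U = Qᴴ V`. The last row of
the upper triangular `R` is `R_NN e_N`, so comparing last rows gives `R_NN V_Nn = U_Nn λ_nᵗ`.
Since the last row of the unitary `U` is a unit vector, this gives
`R_NN² ∑ λ_n^(-2t) |V_Nn|² = 1`, and `R_NN > 0` is then determined.
-/

open Matrix
open scoped ComplexOrder

/-- `A = Q * R` is a QR factorization: `Q` unitary, `R` upper triangular with
strictly positive real diagonal entries. -/
def IsQRFact {N : ℕ} (A Q R : Matrix (Fin N) (Fin N) ℂ) : Prop :=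
  A = Q * R ∧ Q ∈ Matrix.unitaryGroup (Fin N) ℂ ∧
    (∀ i j : Fin N, j < i → R i j = 0) ∧
    (∀ i : Fin N, (R i i).im = 0 ∧ 0 < (R i i).re)

namespace Matrix

variable {n m α : Type*} [Fintype n]

section Unitary

variable [DecidableEq n] [CommRing α] [StarRing α] {V : Matrix n n α}

theorem conj_diagonal_pow (hV : V ∈ unitaryGroup n α) (d : n → α) (k : ℕ) :
    (V * diagonal d * Vᴴ) ^ k = V * diagonal (d ^ k) * Vᴴ := by
  simpa [diagonal_pow, star_eq_conjTranspose] using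
    (map_pow (Unitary.conjStarAlgAut α _ ⟨V, hV⟩) (diagonal d) k).symm

theorem mul_mul_conjTranspose_mul_self (hV : V ∈ unitaryGroup n α) (D : Matrix n n α) :
    V * D * Vᴴ * V = V * D := by
  rw [Matrix.mul_assoc, ← star_eq_conjTranspose, Unitary.star_mul_self_of_mem hV, Matrix.mul_one]

theorem mul_eq_conjTranspose_mul_of_eq_mul {A Q R D : Matrix n n α}
    (hQ : Q ∈ unitaryGroup n α) (hA : A = Q * R) (hAV : A * V = V * D) :
    R * V = Qᴴ * V * D := by
  rw [Matrix.mul_assoc, ← hAV, hA, ← Matrix.mul_assoc, ← Matrix.mul_assoc,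
    ← star_eq_conjTranspose, Unitary.star_mul_self_of_mem hQ, Matrix.one_mul]

end Unitary

theorem BlockTriangular.mul_apply_top [LinearOrder n] [OrderTop n] [NonUnitalNonAssocSemiring α]
    {R : Matrix n n α} (hR : R.BlockTriangular id) (M : Matrix n m α) (j : m) :
    (R * M) ⊤ j = R ⊤ ⊤ * M ⊤ j := by
  rw [mul_apply, Finset.sum_eq_single ⊤]
  · intro k _ hk
    rw [hR (lt_top_iff_ne_top.mpr hk), zero_mul]
  · simp

theorem sum_norm_sq_row_of_mem_unitaryGroup [DecidableEq n] {𝕜 : Type*} [RCLike 𝕜]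
    {U : Matrix n n 𝕜} (hU : U ∈ unitaryGroup n 𝕜) (i : n) : ∑ j, ‖U i j‖ ^ 2 = 1 := by
  have h : (U * Uᴴ) i i = 1 := by
    rw [← star_eq_conjTranspose, Unitary.mul_star_self_of_mem hU, one_apply_eq]
  simp only [mul_apply, conjTranspose_apply, RCLike.star_def, RCLike.mul_conj] at h
  exact_mod_cast h

end Matrix

theorem Real.rpow_neg_one_half_eq_of_sq_mul_eq_one {r S : ℝ} (hr : 0 ≤ r) (h : r ^ 2 * S = 1) :
    S ^ (-(1 : ℝ) / 2) = r := by
  have hS : S = (r ^ 2)⁻¹ := eq_inv_of_mul_eq_one_left (by rwa [mul_comm])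
  rw [hS, ← Real.rpow_natCast, ← Real.rpow_neg hr, ← Real.rpow_mul hr]
  norm_num

theorem Complex.norm_sq_ofReal_mul_mul_zpow_neg (r l : ℝ) (z : ℂ) (t : ℕ) :
    ‖(r : ℂ) * z * (l : ℂ) ^ (-(t : ℤ))‖ ^ 2 = r ^ 2 * (l ^ (-(2 * t : ℤ)) * ‖z‖ ^ 2) := by
  have hl : (|l| ^ (-(t : ℤ))) ^ 2 = l ^ (-(2 * t : ℤ)) := by
    rw [← (even_two_mul (t : ℤ)).neg.zpow_abs, ← zpow_natCast, ← _root_.zpow_mul]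
    ring_nf
  rw [norm_mul, norm_mul, norm_zpow, Complex.norm_real, Complex.norm_real, Real.norm_eq_abs,
    Real.norm_eq_abs, mul_pow, mul_pow, sq_abs, hl]
  ring

theorem qr_last_row_formula_general {N : ℕ}
    (H V Q R : Matrix (Fin (N + 1)) (Fin (N + 1)) ℂ) (lam : Fin (N + 1) → ℝ)
    (hV : V ∈ Matrix.unitaryGroup (Fin (N + 1)) ℂ)
    (hlam : ∀ n, 0 < lam n)
    (hspec : H = V * Matrix.diagonal (fun n => (lam n : ℂ)) * Vᴴ)
    (t : ℕ)
    (hQR : IsQRFact (H ^ t) Q R) :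
    R (Fin.last N) (Fin.last N) =
      (((∑ n, lam n ^ (-(2 * t : ℤ)) * ‖V (Fin.last N) n‖ ^ 2) ^ (-(1 : ℝ) / 2)
        : ℝ) : ℂ) ∧
    ∀ n, (Qᴴ * V) (Fin.last N) n =
      R (Fin.last N) (Fin.last N) * V (Fin.last N) n * (lam n : ℂ) ^ (-(t : ℤ)) := by
  obtain ⟨hfac, hQ, htri, hdiag⟩ := hQR
  have hRV : R * V = Qᴴ * V * diagonal (fun n => (lam n : ℂ) ^ t) := by
    refine mul_eq_conjTranspose_mul_of_eq_mul hQ hfac ?_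
    rw [hspec, conj_diagonal_pow hV, mul_mul_conjTranspose_mul_self hV]
    rfl
  have hU : ∀ n, (Qᴴ * V) (Fin.last N) n =
      R (Fin.last N) (Fin.last N) * V (Fin.last N) n * (lam n : ℂ) ^ (-(t : ℤ)) := by
    intro n
    have hn := congrFun₂ hRV ⊤ n
    rw [BlockTriangular.mul_apply_top (fun i j => htri i j), mul_diagonal,
      Fin.top_eq_last] at hn
    rw [hn, _root_.zpow_neg, zpow_natCast,
      mul_inv_cancel_right₀ (pow_ne_zero _ (Complex.ofReal_ne_zero.mpr (hlam n).ne'))]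
  refine ⟨?_, hU⟩
  obtain ⟨r, hr, hRr⟩ : ∃ r : ℝ, 0 ≤ r ∧ R (Fin.last N) (Fin.last N) = r :=
    ⟨_, (hdiag _).2.le, Complex.ext rfl (by simp [(hdiag _).1])⟩
  have hsum : r ^ 2 * ∑ n, lam n ^ (-(2 * t : ℤ)) * ‖V (Fin.last N) n‖ ^ 2 = 1 := by
    rw [Finset.mul_sum, ← sum_norm_sq_row_of_mem_unitaryGroup
      (mul_mem (Unitary.star_mem hQ) hV) (Fin.last N)]
    simp only [star_eq_conjTranspose, hU, hRr, Complex.norm_sq_ofReal_mul_mul_zpow_neg]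
  rw [hRr, Real.rpow_neg_one_half_eq_of_sq_mul_eq_one hr hsum]

/-- For a positive-definite Hermitian `H = V Λ Vᴴ` and a QR factorization `H^t = Q R`,
the `(N,N)` entry of `R` is `(∑ λ_n^{-2t} |V_{Nn}|²)^{-1/2}` and the last row of
`U = Qᴴ V` satisfies `U_{Nn} = R_{NN} V_{Nn} λ_n^{-t}`. -/
theorem qr_last_row_formula {N : ℕ}
    (H V Q R : Matrix (Fin (N + 1)) (Fin (N + 1)) ℂ) (lam : Fin (N + 1) → ℝ)
    (hH : H.PosDef)
    (hV : V ∈ Matrix.unitaryGroup (Fin (N + 1)) ℂ)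
    (hlam : ∀ n, 0 < lam n)
    (hspec : H = V * Matrix.diagonal (fun n => (lam n : ℂ)) * Vᴴ)
    (t : ℕ)
    (hQR : IsQRFact (H ^ t) Q R)
    (hrow : ∑ n, ‖V (Fin.last N) n‖ ^ 2 = 1) :
    R (Fin.last N) (Fin.last N) =
      (((∑ n, lam n ^ (-(2 * t : ℤ)) * ‖V (Fin.last N) n‖ ^ 2) ^ (-(1 : ℝ) / 2)
        : ℝ) : ℂ) ∧
    ∀ n, (Qᴴ * V) (Fin.last N) n =
      R (Fin.last N) (Fin.last N) * V (Fin.last N) n * (lam n : ℂ) ^ (-(t : ℤ)) :=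
  qr_last_row_formula_general H V Q R lam hV hlam hspec t hQR
end

section
/- Let H be an N×N positive-definite Hermitian matrix over ℂ with spectral decomposition H = V Λ Vᴴ, where V is unitary and Λ = diag(λ₁, …, λ_N) with each λ_n > 0, and set β_n = |V_{Nn}|. Fix an integer t ≥ 0, let H^t = Q R be a QR factorization, and set X = Qᴴ H Q. Then ∑_{n=1}^{N−1} |X_{Nn}|² = (X²)_{NN} − (X_{NN})², and this quantity equals (∑_{n=1}^N λ_n^{−2t+2} β_n²)/(∑_{n=1}^N λ_n^{−2t} β_n²) − (∑_{n=1}^N λ_n^{−2t+1} β_n²)²/(∑_{n=1}^N λ_n^{−2t} β_n²)². -/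
/-! With `C = Vᴴ Q`, which is unitary, `X = Cᴴ Λ C`, so `(Xᵏ)_{NN} = ∑ₙ λₙᵏ |C_{nN}|²`
for `k = 1, 2`, while `(X²)_{NN} = ∑ₙ |X_{Nn}|²` because `X` is Hermitian. As `R` is upper
triangular, the last row of `R V = Qᴴ Hᵗ V = Qᴴ V Λᵗ` reads `R_{NN} V_{Nn} = conj (C_{nN}) λₙᵗ`,
so `|C_{nN}|² = |R_{NN}|² λₙ^{-2t} βₙ²`; the unknown factor `|R_{NN}|²` is the reciprocal of
`∑ₙ λₙ^{-2t} βₙ²` because the last column of `C` is a unit vector. -/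

open Matrix
open scoped ComplexOrder

namespace Matrix

theorem pow_of_eq_mul_diagonal_mul_conjTranspose {ι α : Type*} [Fintype ι] [DecidableEq ι]
    [CommRing α] [StarRing α] {H V : Matrix ι ι α} {d : ι → α} (hV : Vᴴ * V = 1)
    (hH : H = V * diagonal d * Vᴴ) (k : ℕ) : H ^ k = V * diagonal (d ^ k) * Vᴴ := by
  induction k with
  | zero => simpa using (mul_eq_one_comm.mp hV).symm
  | succ k ih =>
    rw [pow_succ, ih, hH, pow_succ, show diagonal (d ^ k * d) = diagonal (d ^ k) * diagonal d from
      (diagonal_mul_diagonal _ _).symm]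
    simp only [mul_assoc]
    rw [← mul_assoc Vᴴ V, hV, one_mul]

section RCLike

variable {ι 𝕜 : Type*} [Fintype ι] [RCLike 𝕜]

theorem conjTranspose_mul_diagonal_mul_apply_self [DecidableEq ι] (C : Matrix ι ι 𝕜)
    (d : ι → ℝ) (i : ι) :
    (Cᴴ * diagonal (fun n => (d n : 𝕜)) * C) i i = ((∑ n, d n * ‖C n i‖ ^ 2 : ℝ) : 𝕜) := by
  rw [mul_assoc, mul_apply]
  push_cast
  refine Finset.sum_congr rfl fun n _ => ?_
  rw [diagonal_mul, conjTranspose_apply, ← RCLike.mul_conj, RCLike.star_def]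
  ring

theorem sum_norm_sq_apply_eq_one [DecidableEq ι] {C : Matrix ι ι 𝕜}
    (hC : C ∈ unitaryGroup ι 𝕜) (i : ι) : ∑ n, ‖C n i‖ ^ 2 = 1 := by
  have h := conjTranspose_mul_diagonal_mul_apply_self C 1 i
  simp only [Pi.one_apply, RCLike.ofReal_one, one_mul, diagonal_one, mul_one,
    ← star_eq_conjTranspose, mem_unitaryGroup_iff'.mp hC, one_apply_eq] at h
  exact_mod_cast h.symm

theorem IsHermitian.mul_self_apply_self {X : Matrix ι ι 𝕜} (hX : X.IsHermitian) (i : ι) :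
    (X * X) i i = ((∑ j, ‖X i j‖ ^ 2 : ℝ) : 𝕜) := by
  rw [mul_apply]
  push_cast
  refine Finset.sum_congr rfl fun j _ => ?_
  rw [← hX.apply j i, ← RCLike.mul_conj, RCLike.star_def]

theorem IsHermitian.sum_erase_norm_sq_eq [DecidableEq ι] {X : Matrix ι ι 𝕜}
    (hX : X.IsHermitian) (i : ι) :
    ((∑ j ∈ Finset.univ.erase i, ‖X i j‖ ^ 2 : ℝ) : 𝕜) = (X * X) i i - X i i ^ 2 := by
  have hii : X i i ^ 2 = ((‖X i i‖ ^ 2 : ℝ) : 𝕜) := by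
    rw [sq]
    nth_rewrite 2 [← hX.apply i i]
    rw [RCLike.star_def, RCLike.mul_conj, RCLike.ofReal_pow]
  rw [hX.mul_self_apply_self, hii, ← Finset.sum_erase_add _ _ (Finset.mem_univ i)]
  push_cast
  ring

theorem isHermitian_conjTranspose_mul_diagonal_mul [DecidableEq ι] (C : Matrix ι ι 𝕜)
    (d : ι → ℝ) : (Cᴴ * diagonal (fun n => (d n : 𝕜)) * C).IsHermitian :=
  isHermitian_conjTranspose_mul_mul C (isHermitian_diagonal_of_self_adjoint _ (by ext; simp))

theorem sum_erase_norm_sq_conjTranspose_mul_diagonal_mul [DecidableEq ι] {C : Matrix ι ι 𝕜}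
    (hC : C ∈ unitaryGroup ι 𝕜) (d : ι → ℝ) (i : ι) :
    ∑ j ∈ Finset.univ.erase i, ‖(Cᴴ * diagonal (fun n => (d n : 𝕜)) * C) i j‖ ^ 2 =
      ∑ n, d n ^ 2 * ‖C n i‖ ^ 2 - (∑ n, d n * ‖C n i‖ ^ 2) ^ 2 := by
  have hCC : Cᴴᴴ * Cᴴ = 1 := by
    rw [conjTranspose_conjTranspose, ← star_eq_conjTranspose]
    exact mem_unitaryGroup_iff.mp hC
  have hsq : (Cᴴ * diagonal (fun n => (d n : 𝕜)) * C) ^ 2 =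
      Cᴴ * diagonal (fun n => ((d n ^ 2 : ℝ) : 𝕜)) * C := by
    rw [pow_of_eq_mul_diagonal_mul_conjTranspose hCC (by rw [conjTranspose_conjTranspose]),
      conjTranspose_conjTranspose]
    push_cast
    rfl
  have h := (isHermitian_conjTranspose_mul_diagonal_mul C d).sum_erase_norm_sq_eq i
  rw [← sq, hsq, conjTranspose_mul_diagonal_mul_apply_self,
    conjTranspose_mul_diagonal_mul_apply_self] at h
  exact_mod_cast h

end RCLike

theorem BlockTriangular.mul_apply_last {N : ℕ} {α : Type*} [Semiring α]
    {R M : Matrix (Fin (N + 1)) (Fin (N + 1)) α} (hR : R.BlockTriangular id) (j : Fin (N + 1)) :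
    (R * M) (Fin.last N) j = R (Fin.last N) (Fin.last N) * M (Fin.last N) j := by
  rw [mul_apply, Finset.sum_eq_single (Fin.last N)]
  · intro k _ hk
    rw [show R (Fin.last N) k = 0 from hR (Fin.lt_last_iff_ne_last.mpr hk), zero_mul]
  · simp

end Matrix

theorem sum_sq_mul_sub_sq_eq_of_eq_mul {ι : Type*} [Fintype ι] (μ w s : ι → ℝ) (ρ : ℝ)
    (hs : ∀ n, s n = ρ * w n) (hs1 : ∑ n, s n = 1) :
    ∑ n, μ n ^ 2 * s n - (∑ n, μ n * s n) ^ 2 =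
      (∑ n, μ n ^ 2 * w n) / ∑ n, w n - (∑ n, μ n * w n) ^ 2 / (∑ n, w n) ^ 2 := by
  simp only [hs, mul_left_comm _ ρ, ← Finset.mul_sum] at hs1 ⊢
  have hw : ∑ n, w n ≠ 0 := right_ne_zero_of_mul_eq_one hs1
  rw [eq_inv_of_mul_eq_one_left hs1]
  field_simp

theorem norm_sq_conjTranspose_mul_apply_last {N : ℕ}
    {H V Q R : Matrix (Fin (N + 1)) (Fin (N + 1)) ℂ} {lam : Fin (N + 1) → ℝ} {t : ℕ}
    (hV : Vᴴ * V = 1) (hlam : ∀ n, lam n ≠ 0) (hspec : H = V * diagonal (fun n => (lam n : ℂ)) * Vᴴ)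
    (hA : H ^ t = Q * R) (hQ : Qᴴ * Q = 1) (hR : R.BlockTriangular id) (n : Fin (N + 1)) :
    ‖(Vᴴ * Q) n (Fin.last N)‖ ^ 2 =
      ‖R (Fin.last N) (Fin.last N)‖ ^ 2 * (lam n ^ (-(2 * t : ℤ)) * ‖V (Fin.last N) n‖ ^ 2) := by
  have hRV : R * V = Qᴴ * V * diagonal (fun n => (lam n : ℂ) ^ t) :=
    calc R * V = Qᴴ * H ^ t * V := by rw [hA, ← mul_assoc, hQ, one_mul]
      _ = _ := by
        rw [pow_of_eq_mul_diagonal_mul_conjTranspose hV hspec]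
        simp only [mul_assoc, hV, mul_one]
        rfl
  have hentry := congrFun₂ hRV (Fin.last N) n
  rw [hR.mul_apply_last, mul_diagonal] at hentry
  have hQV : ‖(Qᴴ * V) (Fin.last N) n‖ = ‖(Vᴴ * Q) n (Fin.last N)‖ := by
    rw [← norm_star, ← conjTranspose_apply, conjTranspose_mul, conjTranspose_conjTranspose]
  have hnorm := congrArg (fun z : ℂ => ‖z‖ ^ 2) hentry
  simp only [norm_mul, norm_pow, hQV, Complex.norm_real, Real.norm_eq_abs, mul_pow, ← abs_pow,
    abs_sq] at hnorm
  have hpow : lam n ^ (-(2 * t : ℤ)) = ((lam n ^ t) ^ 2)⁻¹ := by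
    rw [_root_.zpow_neg, mul_comm, _root_.zpow_mul]
    norm_cast
  have hlamt : lam n ^ t ≠ 0 := pow_ne_zero t (hlam n)
  rw [hpow]
  field_simp
  linarith

theorem qr_error_formula_general {N : ℕ}
    (H V Q R : Matrix (Fin (N + 1)) (Fin (N + 1)) ℂ) (lam : Fin (N + 1) → ℝ)
    (hV : V ∈ Matrix.unitaryGroup (Fin (N + 1)) ℂ)
    (hlam : ∀ n, 0 < lam n)
    (hspec : H = V * Matrix.diagonal (fun n => (lam n : ℂ)) * Vᴴ)
    (beta : Fin (N + 1) → ℝ)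
    (hbeta : ∀ n, beta n = ‖V (Fin.last N) n‖)
    (t : ℕ)
    (hQR : IsQRFact (H ^ t) Q R)
    (X : Matrix (Fin (N + 1)) (Fin (N + 1)) ℂ)
    (hX : X = Qᴴ * H * Q) :
    ((∑ n ∈ Finset.univ.erase (Fin.last N), ‖X (Fin.last N) n‖ ^ 2 : ℝ) : ℂ) =
      (X * X) (Fin.last N) (Fin.last N) - X (Fin.last N) (Fin.last N) ^ 2 ∧
    (∑ n ∈ Finset.univ.erase (Fin.last N), ‖X (Fin.last N) n‖ ^ 2 : ℝ) =
      (∑ n, lam n ^ (-(2 * t : ℤ) + 2) * beta n ^ 2) /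
        (∑ n, lam n ^ (-(2 * t : ℤ)) * beta n ^ 2) -
      (∑ n, lam n ^ (-(2 * t : ℤ) + 1) * beta n ^ 2) ^ 2 /
        (∑ n, lam n ^ (-(2 * t : ℤ)) * beta n ^ 2) ^ 2 := by
  obtain ⟨hfact, hQ, hR, -⟩ := hQR
  obtain ⟨C, hCdef⟩ : ∃ C, C = Vᴴ * Q := ⟨_, rfl⟩
  have hC : C ∈ unitaryGroup (Fin (N + 1)) ℂ := hCdef ▸ mul_mem (Unitary.star_mem hV) hQ
  have hXC : X = Cᴴ * diagonal (fun n => (lam n : ℂ)) * C := by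
    simp only [hX, hspec, hCdef, conjTranspose_mul, conjTranspose_conjTranspose, mul_assoc]
  rw [← RCLike.ofReal_eq_complex_ofReal] at hXC
  refine ⟨(hXC ▸ isHermitian_conjTranspose_mul_diagonal_mul C lam).sum_erase_norm_sq_eq _, ?_⟩
  have hcol (n) : ‖C n (Fin.last N)‖ ^ 2 =
      ‖R (Fin.last N) (Fin.last N)‖ ^ 2 * (lam n ^ (-(2 * t : ℤ)) * beta n ^ 2) := by
    rw [hbeta, hCdef]
    exact norm_sq_conjTranspose_mul_apply_last (mem_unitaryGroup_iff'.mp hV)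
      (fun n => (hlam n).ne') hspec hfact (mem_unitaryGroup_iff'.mp hQ) hR n
  have hshift (n) (k : ℤ) : lam n ^ (-(2 * t : ℤ) + k) * beta n ^ 2 =
      lam n ^ k * (lam n ^ (-(2 * t : ℤ)) * beta n ^ 2) := by
    rw [zpow_add₀ (hlam n).ne']
    ring
  rw [hXC, sum_erase_norm_sq_conjTranspose_mul_diagonal_mul hC,
    sum_sq_mul_sub_sq_eq_of_eq_mul lam _ _ _ hcol (sum_norm_sq_apply_eq_one hC _)]
  simp only [hshift, zpow_ofNat, pow_one]

/-- For a positive-definite Hermitian `H = V Λ Vᴴ` with `β_n = |V_{Nn}|`, a QR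
factorization `H^t = Q R`, and `X = Qᴴ H Q`, the sum of the squared moduli of the
off-diagonal entries of the last row of `X` equals `(X²)_{NN} - (X_{NN})²`, which
equals the explicit eigenvalue expression. -/
theorem qr_error_formula {N : ℕ}
    (H V Q R : Matrix (Fin (N + 1)) (Fin (N + 1)) ℂ) (lam : Fin (N + 1) → ℝ)
    (hH : H.PosDef)
    (hV : V ∈ Matrix.unitaryGroup (Fin (N + 1)) ℂ)
    (hlam : ∀ n, 0 < lam n)
    (hspec : H = V * Matrix.diagonal (fun n => (lam n : ℂ)) * Vᴴ)
    (beta : Fin (N + 1) → ℝ)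
    (hbeta : ∀ n, beta n = ‖V (Fin.last N) n‖)
    (t : ℕ)
    (hQR : IsQRFact (H ^ t) Q R)
    (X : Matrix (Fin (N + 1)) (Fin (N + 1)) ℂ)
    (hX : X = Qᴴ * H * Q) :
    ((∑ n ∈ Finset.univ.erase (Fin.last N), ‖X (Fin.last N) n‖ ^ 2 : ℝ) : ℂ) =
      (X * X) (Fin.last N) (Fin.last N) - X (Fin.last N) (Fin.last N) ^ 2 ∧
    (∑ n ∈ Finset.univ.erase (Fin.last N), ‖X (Fin.last N) n‖ ^ 2 : ℝ) =
      (∑ n, lam n ^ (-(2 * t : ℤ) + 2) * beta n ^ 2) /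
        (∑ n, lam n ^ (-(2 * t : ℤ)) * beta n ^ 2) -
      (∑ n, lam n ^ (-(2 * t : ℤ) + 1) * beta n ^ 2) ^ 2 /
        (∑ n, lam n ^ (-(2 * t : ℤ)) * beta n ^ 2) ^ 2 :=
  qr_error_formula_general H V Q R lam hV hlam hspec beta hbeta t hQR X hX
end

section
/- Fix reals λ₋ > 0, p > 0 and R > 0. There exist a constant C > 0 and N₀ ∈ ℕ such that for all N ≥ N₀ and all reals ξ₁ ≤ ξ₂ ≤ ξ₃ with |ξ_j| ≤ R for j = 1,2,3, setting λ_j = λ₋ + N^{−2/3} ξ_j (which are positive for N large), one has |(λ₃ − λ₂) − p(λ₂ − λ₁) + λ₋·(λ₂/λ₃ − (λ₁/λ₂)^p)| ≤ C N^{−4/3}. -/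
/-!
Write `η = N^{-2/3} R` for the size of the deviations `λ_j - λ₋`. Exact algebra turns the
expression into `(λ₃ - λ₂)(λ₃ - λ₋)/λ₃ + p(λ₂ - λ₁)(λ₋ - λ₂)/λ₂ - λ₋ r`, where
`r = (1 + x)^p - 1 - p x` and `x = (λ₁ - λ₂)/λ₂`. The first two terms are products of two
`O(η)` factors, and `r = O(x²) = O(η²)` because `(1 + x)^p = exp (p log (1 + x))` and both `exp`
and `log` have quadratic first-order remainders near the origin.
-/

open Real Filter Topology

lemma abs_log_one_add_sub_self_le {x : ℝ} (hx : |x| ≤ 1 / 2) : |log (1 + x) - x| ≤ 2 * x ^ 2 := by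
  have h := abs_log_sub_add_sum_range_le (x := -x) (by rw [abs_neg]; linarith) 1
  simp only [Finset.range_one, Finset.sum_singleton, abs_neg, sub_neg_eq_add] at h
  have hx0 := abs_nonneg x
  calc |log (1 + x) - x| = |-x + log (1 + x)| := by ring_nf
    _ ≤ |x| ^ 2 / (1 - |x|) := by simpa using h
    _ ≤ 2 * x ^ 2 := by
        rw [div_le_iff₀ (by linarith), sq_abs]
        nlinarith [sq_nonneg x]

lemma abs_log_one_add_le {x : ℝ} (hx : |x| ≤ 1 / 2) : |log (1 + x)| ≤ 2 * |x| := by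
  have h := abs_log_one_add_sub_self_le hx
  have hx2 : 2 * x ^ 2 ≤ |x| := by rw [← sq_abs]; nlinarith [abs_nonneg x]
  calc |log (1 + x)| = |(log (1 + x) - x) + x| := by ring_nf
    _ ≤ |log (1 + x) - x| + |x| := abs_add_le _ _
    _ ≤ 2 * |x| := by linarith

lemma abs_one_add_rpow_sub_one_sub_mul_le (q : ℝ) {x : ℝ} (hx : |x| ≤ 1 / 2)
    (hqx : 2 * |q * x| ≤ 1) :
    |(1 + x) ^ q - 1 - q * x| ≤ (4 * q ^ 2 + 2 * |q|) * x ^ 2 := by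
  set y := q * log (1 + x)
  have hpos : 0 < 1 + x := by linarith [neg_abs_le x]
  have hy : |y| ≤ 2 * |q * x| := by
    rw [abs_mul, abs_mul, mul_left_comm]
    exact mul_le_mul_of_nonneg_left (abs_log_one_add_le hx) (abs_nonneg q)
  have hexp : |exp y - 1 - y| ≤ 4 * q ^ 2 * x ^ 2 := calc
    |exp y - 1 - y| ≤ y ^ 2 := abs_exp_sub_one_sub_id_le (hy.trans hqx)
    _ = |y| ^ 2 := (sq_abs y).symm
    _ ≤ (2 * |q * x|) ^ 2 := pow_le_pow_left₀ (abs_nonneg y) hy 2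
    _ = 4 * q ^ 2 * x ^ 2 := by rw [mul_pow, sq_abs]; ring
  have hlog : |q * (log (1 + x) - x)| ≤ |q| * (2 * x ^ 2) := by
    rw [abs_mul]
    exact mul_le_mul_of_nonneg_left (abs_log_one_add_sub_self_le hx) (abs_nonneg q)
  rw [rpow_def_of_pos hpos, mul_comm (log _)]
  calc |exp y - 1 - q * x| = |(exp y - 1 - y) + q * (log (1 + x) - x)| := by
        congr 1; simp only [y]; ring
    _ ≤ |exp y - 1 - y| + |q * (log (1 + x) - x)| := abs_add_le _ _
    _ ≤ (4 * q ^ 2 + 2 * |q|) * x ^ 2 := by linarith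

lemma gap_expression_eq (a p l₁ l₂ l₃ : ℝ) (h₂ : l₂ ≠ 0) (h₃ : l₃ ≠ 0) :
    (l₃ - l₂) - p * (l₂ - l₁) + a * (l₂ / l₃ - (l₁ / l₂) ^ p) =
      (l₃ - l₂) * ((l₃ - a) / l₃) + p * (l₂ - l₁) * ((a - l₂) / l₂) -
        a * ((l₁ / l₂) ^ p - 1 - p * ((l₁ - l₂) / l₂)) := by
  field_simp
  ring

lemma abs_div_le_of_half_le {a u v c : ℝ} (ha : 0 < a) (hu : a / 2 ≤ u) (hv : |v| ≤ c) :
    |v / u| ≤ 2 * c / a := by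
  have hu0 : 0 < u := by linarith
  rw [abs_div, abs_of_pos hu0, div_le_div_iff₀ hu0 ha]
  nlinarith [abs_nonneg v]

lemma abs_gap_expression_le {a p η l₁ l₂ l₃ : ℝ} (ha : 0 < a) (hη : 8 * (|p| + 1) * η ≤ a)
    (h₁ : |l₁ - a| ≤ η) (h₂ : |l₂ - a| ≤ η) (h₃ : |l₃ - a| ≤ η) :
    |(l₃ - l₂) - p * (l₂ - l₁) + a * (l₂ / l₃ - (l₁ / l₂) ^ p)| ≤
      (4 + 36 * |p| + 64 * p ^ 2) / a * η ^ 2 := by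
  have hp0 := abs_nonneg p
  have hη0 : 0 ≤ η := (abs_nonneg _).trans h₁
  have hηa : 8 * η ≤ a := by nlinarith
  obtain ⟨h₁l, h₁u⟩ := abs_le.mp h₁
  obtain ⟨h₂l, h₂u⟩ := abs_le.mp h₂
  obtain ⟨h₃l, h₃u⟩ := abs_le.mp h₃
  have hl₂ : a / 2 ≤ l₂ := by linarith
  have hl₃ : a / 2 ≤ l₃ := by linarith
  have hl₂0 : l₂ ≠ 0 := by linarith
  set x := (l₁ - l₂) / l₂ with hx_def
  have hx : |x| ≤ 2 * (2 * η) / a :=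
    abs_div_le_of_half_le ha hl₂ (abs_le.mpr ⟨by linarith, by linarith⟩)
  have hx_half : |x| ≤ 1 / 2 := hx.trans (by rw [div_le_iff₀ ha]; linarith)
  have hpx : 2 * |p * x| ≤ 1 := by
    rw [abs_mul]
    have : |p| * |x| ≤ |p| * (2 * (2 * η) / a) := mul_le_mul_of_nonneg_left hx hp0
    have : |p| * (2 * (2 * η) / a) * a = 4 * |p| * η := by field_simp; ring
    nlinarith
  have hbase : l₁ / l₂ = 1 + x := by
    rw [hx_def]; field_simp; ring
  have hT₁ : |(l₃ - l₂) * ((l₃ - a) / l₃)| ≤ 2 * η * (2 * η / a) := by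
    rw [abs_mul]
    exact mul_le_mul (abs_le.mpr ⟨by linarith, by linarith⟩)
      (abs_div_le_of_half_le ha hl₃ h₃) (abs_nonneg _) (by positivity)
  have hT₂ : |p * (l₂ - l₁) * ((a - l₂) / l₂)| ≤ |p| * (2 * η * (2 * η / a)) := by
    rw [abs_mul, abs_mul, mul_assoc]
    exact mul_le_mul_of_nonneg_left (mul_le_mul (abs_le.mpr ⟨by linarith, by linarith⟩)
      (abs_div_le_of_half_le ha hl₂ (by rwa [abs_sub_comm])) (abs_nonneg _) (by positivity)) hp0
  have hT₃ : |a * ((l₁ / l₂) ^ p - 1 - p * x)| ≤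
      a * ((4 * p ^ 2 + 2 * |p|) * (2 * (2 * η) / a) ^ 2) := by
    rw [abs_mul, abs_of_pos ha, hbase]
    refine mul_le_mul_of_nonneg_left ?_ ha.le
    calc |(1 + x) ^ p - 1 - p * x| ≤ (4 * p ^ 2 + 2 * |p|) * x ^ 2 :=
          abs_one_add_rpow_sub_one_sub_mul_le p hx_half hpx
      _ ≤ (4 * p ^ 2 + 2 * |p|) * (2 * (2 * η) / a) ^ 2 := by
          rw [← sq_abs x]
          gcongr
  rw [gap_expression_eq a p l₁ l₂ l₃ hl₂0 (by linarith)]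
  calc _ ≤ |(l₃ - l₂) * ((l₃ - a) / l₃) + p * (l₂ - l₁) * ((a - l₂) / l₂)| +
        |a * ((l₁ / l₂) ^ p - 1 - p * x)| := abs_sub _ _
    _ ≤ |(l₃ - l₂) * ((l₃ - a) / l₃)| + |p * (l₂ - l₁) * ((a - l₂) / l₂)| +
        |a * ((l₁ / l₂) ^ p - 1 - p * x)| := by gcongr; exact abs_add_le _ _
    _ ≤ 2 * η * (2 * η / a) + |p| * (2 * η * (2 * η / a)) +
        a * ((4 * p ^ 2 + 2 * |p|) * (2 * (2 * η) / a) ^ 2) := by gcongr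
    _ = (4 + 36 * |p| + 64 * p ^ 2) / a * η ^ 2 := by field_simp; ring

lemma eventually_const_mul_rpow_le {r : ℝ} (hr : r < 0) (c : ℝ) {a : ℝ} (ha : 0 < a) :
    ∀ᶠ N : ℕ in atTop, c * (N : ℝ) ^ r ≤ a := by
  have h : Tendsto (fun N : ℕ => (N : ℝ) ^ r) atTop (𝓝 0) := by
    simpa [Function.comp_def] using
      (tendsto_rpow_neg_atTop (neg_pos.mpr hr)).comp tendsto_natCast_atTop_atTop
  simpa using (h.const_mul c).eventually_le_const (by simpa using ha)

theorem gap_condition_expansion_general (lamMinus p R : ℝ)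
    (hlam : 0 < lamMinus) :
    ∃ C > 0, ∃ N₀ : ℕ, ∀ N : ℕ, N₀ ≤ N →
      ∀ ξ₁ ξ₂ ξ₃ : ℝ, ξ₁ ≤ ξ₂ → ξ₂ ≤ ξ₃ →
        |ξ₁| ≤ R → |ξ₂| ≤ R → |ξ₃| ≤ R →
        ∀ lam₁ lam₂ lam₃ : ℝ,
          lam₁ = lamMinus + (N : ℝ) ^ (-(2 : ℝ) / 3) * ξ₁ →
          lam₂ = lamMinus + (N : ℝ) ^ (-(2 : ℝ) / 3) * ξ₂ →
          lam₃ = lamMinus + (N : ℝ) ^ (-(2 : ℝ) / 3) * ξ₃ →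
          |(lam₃ - lam₂) - p * (lam₂ - lam₁) +
              lamMinus * (lam₂ / lam₃ - (lam₁ / lam₂) ^ p)| ≤
            C * (N : ℝ) ^ (-(4 : ℝ) / 3) := by
  set M := (4 + 36 * |p| + 64 * p ^ 2) / lamMinus * R ^ 2
  obtain ⟨N₀, hN₀⟩ := eventually_atTop.mp
    (eventually_const_mul_rpow_le (r := -(2 : ℝ) / 3) (by norm_num) (8 * (|p| + 1) * R) hlam)
  refine ⟨M + 1, by positivity, N₀, fun N hN ξ₁ ξ₂ ξ₃ _ _ h₁ h₂ h₃ lam₁ lam₂ lam₃ hl₁ hl₂ hl₃ => ?_⟩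
  have hsmall := hN₀ N hN
  set ε := (N : ℝ) ^ (-(2 : ℝ) / 3)
  have hε : 0 ≤ ε := by positivity
  have hdev : ∀ ξ lam, |ξ| ≤ R → lam = lamMinus + ε * ξ → |lam - lamMinus| ≤ ε * R := by
    rintro ξ lam hξ rfl
    rw [add_sub_cancel_left, abs_mul, abs_of_nonneg hε]
    exact mul_le_mul_of_nonneg_left hξ hε
  have hε_sq : ε ^ 2 = (N : ℝ) ^ (-(4 : ℝ) / 3) := by
    rw [← rpow_natCast, ← rpow_mul (Nat.cast_nonneg N)]
    norm_num
  calc _ ≤ (4 + 36 * |p| + 64 * p ^ 2) / lamMinus * (ε * R) ^ 2 :=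
        abs_gap_expression_le hlam (by linarith)
          (hdev ξ₁ lam₁ h₁ hl₁) (hdev ξ₂ lam₂ h₂ hl₂) (hdev ξ₃ lam₃ h₃ hl₃)
    _ = M * ε ^ 2 := by ring
    _ ≤ (M + 1) * (N : ℝ) ^ (-(4 : ℝ) / 3) := by
        rw [← hε_sq]; gcongr; linarith

/-- Uniform deterministic expansion: for bounded rescaled fluctuations `ξ₁ ≤ ξ₂ ≤ ξ₃`,
with `λ_j = λ₋ + N^{-2/3} ξ_j`, one has
`|(λ₃-λ₂) - p(λ₂-λ₁) + λ₋ (λ₂/λ₃ - (λ₁/λ₂)^p)| ≤ C N^{-4/3}`. -/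
theorem gap_condition_expansion (lamMinus p R : ℝ)
    (hlam : 0 < lamMinus) (hp : 0 < p) (hR : 0 < R) :
    ∃ C > 0, ∃ N₀ : ℕ, ∀ N : ℕ, N₀ ≤ N →
      ∀ ξ₁ ξ₂ ξ₃ : ℝ, ξ₁ ≤ ξ₂ → ξ₂ ≤ ξ₃ →
        |ξ₁| ≤ R → |ξ₂| ≤ R → |ξ₃| ≤ R →
        ∀ lam₁ lam₂ lam₃ : ℝ,
          lam₁ = lamMinus + (N : ℝ) ^ (-(2 : ℝ) / 3) * ξ₁ →
          lam₂ = lamMinus + (N : ℝ) ^ (-(2 : ℝ) / 3) * ξ₂ →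
          lam₃ = lamMinus + (N : ℝ) ^ (-(2 : ℝ) / 3) * ξ₃ →
          |(lam₃ - lam₂) - p * (lam₂ - lam₁) +
              lamMinus * (lam₂ / lam₃ - (lam₁ / lam₂) ^ p)| ≤
            C * (N : ℝ) ^ (-(4 : ℝ) / 3) :=
  gap_condition_expansion_general lamMinus p R hlam
end

section
/- Let 0 < σ < 1/3, 0 < s < σ/40 and 0 < c < 10/σ. There exists N₀ ∈ ℕ such that for all N ≥ N₀ and every eigen-data configuration of size N satisfying Condition R(N,s), the number of indices n with 2 ≤ n ≤ N and δ_n > δ₂^{1+c} is at most N^{2s}. -/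
open Finset MeasureTheory
open scoped Classical

noncomputable section

/-- The Marchenko–Pastur density `ρ_d`. -/
def mpDensity (d x : ℝ) : ℝ :=
  if 0 < x then
    (1 / (2 * Real.pi * d)) *
      Real.sqrt (max (((1 + Real.sqrt d) ^ 2 - x) * (x - (1 - Real.sqrt d) ^ 2)) 0) / x
  else 0

/-- The quantile `γ_n`: the smallest `t` with `∫_{(-∞,t]} ρ_d = n/N`. -/
def mpQuantile (d : ℝ) (N n : ℕ) : ℝ :=
  sInf {t : ℝ | (∫ x in Set.Iic t, mpDensity d x) = (n : ℝ) / N}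

/-- An eigen-data configuration of size `N`: eigenvalues `0 < λ₁ ≤ ⋯ ≤ λ_N` and
nonnegative weights `β₁, …, β_N` with `β₁ > 0` and `∑ β_n² = 1`. -/
structure EigenData (N : ℕ) where
  lam : ℕ → ℝ
  beta : ℕ → ℝ
  lam_pos : 0 < lam 1
  lam_mono : ∀ m n, 1 ≤ m → m ≤ n → n ≤ N → lam m ≤ lam n
  beta_nonneg : ∀ n, 1 ≤ n → n ≤ N → 0 ≤ beta n
  beta_one_pos : 0 < beta 1
  beta_norm : ∑ n ∈ Finset.Icc 1 N, (beta n) ^ 2 = 1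

namespace EigenData

variable {N : ℕ}

/-- `δ_n = λ₁²/λ_n²`. -/
def δ (E : EigenData N) (n : ℕ) : ℝ := E.lam 1 ^ 2 / E.lam n ^ 2

/-- `Δ_n = λ_n - λ₁`. -/
def Δ (E : EigenData N) (n : ℕ) : ℝ := E.lam n - E.lam 1

/-- `ν_n = β_n²/β₁²`. -/
def ν (E : EigenData N) (n : ℕ) : ℝ := E.beta n ^ 2 / E.beta 1 ^ 2

/-- Condition R(N,s): delocalization, edge gaps and rigidity. -/
def CondR (d s : ℝ) (E : EigenData N) : Prop :=
  (∀ n ∈ Finset.Icc 1 N, E.beta n ≤ (N : ℝ) ^ (-1 / 2 + s / 2 : ℝ)) ∧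
  (∀ n ∈ ({1, 2, N - 1, N} : Set ℕ), (N : ℝ) ^ (-1 / 2 - s / 2 : ℝ) ≤ E.beta n) ∧
  (∀ n ∈ ({N - 1, N - 2} : Set ℕ),
    (N : ℝ) ^ (-2 / 3 - s / 2 : ℝ) ≤ E.lam N - E.lam n ∧
      E.lam N - E.lam n ≤ (N : ℝ) ^ (-2 / 3 + s / 2 : ℝ)) ∧
  (∀ n ∈ ({2, 3} : Set ℕ),
    (N : ℝ) ^ (-2 / 3 - s / 2 : ℝ) ≤ E.lam n - E.lam 1 ∧
      E.lam n - E.lam 1 ≤ (N : ℝ) ^ (-2 / 3 + s / 2 : ℝ)) ∧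
  (∀ n ∈ Finset.Icc 1 N, |E.lam n - mpQuantile d N n| ≤
    (N : ℝ) ^ (-2 / 3 + s / 2 : ℝ) * ((min n (N - n + 1) : ℕ) : ℝ) ^ (-1 / 3 : ℝ))

/-- Condition L(N,p): `λ₂/λ₃ < (λ₁/λ₂)^p`. -/
def CondL (p : ℝ) (E : EigenData N) : Prop :=
  E.lam 2 / E.lam 3 < (E.lam 1 / E.lam 2) ^ p

/-- The QR error function `E_QR(t)`. -/
def EQR (E : EigenData N) (t : ℝ) : ℝ :=
  (∑ n ∈ Finset.Icc 1 N, E.lam n ^ 2 * E.δ n ^ t * E.ν n) /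
      (∑ n ∈ Finset.Icc 1 N, E.δ n ^ t * E.ν n) -
    (∑ n ∈ Finset.Icc 1 N, E.lam n * E.δ n ^ t * E.ν n) ^ 2 /
      (∑ n ∈ Finset.Icc 1 N, E.δ n ^ t * E.ν n) ^ 2

/-- The QR halting time `T_{QR,ε} = inf {t ≥ 0 : E_QR(t) ≤ ε²}`. -/
def TQR (E : EigenData N) (ε : ℝ) : ℝ :=
  sInf {t : ℝ | 0 ≤ t ∧ E.EQR t ≤ ε ^ 2}

/-- The approximate QR halting time `T*_{QR,ε}` with `ε = N^{-α/2}`. -/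
def TstarQR (E : EigenData N) (α : ℝ) : ℝ :=
  (α * Real.log N + 2 * Real.log (E.Δ 2) + Real.log (E.ν 2)) / Real.log (E.δ 2)⁻¹

/-- The inverse power method iterate `λ_IP(t)`. -/
def lamIP (E : EigenData N) (t : ℝ) : ℝ :=
  (∑ n ∈ Finset.Icc 1 N, E.lam n ^ (-2 * t : ℝ) * E.beta n ^ 2) /
    (∑ n ∈ Finset.Icc 1 N, E.lam n ^ (-2 * t - 1 : ℝ) * E.beta n ^ 2)

/-- The inverse power method error `E_IP(t) = λ_IP(t+1)⁻¹ - λ_IP(t)⁻¹`. -/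
def EIP (E : EigenData N) (t : ℝ) : ℝ := (E.lamIP (t + 1))⁻¹ - (E.lamIP t)⁻¹

/-- The inverse power method halting time `T_{IP,ε} = inf {t ≥ 0 : E_IP(t) ≤ ε²}`. -/
def TIP (E : EigenData N) (ε : ℝ) : ℝ :=
  sInf {t : ℝ | 0 ≤ t ∧ E.EIP t ≤ ε ^ 2}

/-- The leading part `E_{IP,0}(t)` of the inverse power method error. -/
def EIP0 (E : EigenData N) (t : ℝ) : ℝ :=
  (∑ n ∈ Finset.Icc 2 N, (1 - E.δ n) * ((E.lam 1)⁻¹ - (E.lam n)⁻¹) * E.δ n ^ t * E.ν n) /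
    ((∑ n ∈ Finset.Icc 1 N, E.δ n ^ t * E.ν n) *
      (∑ n ∈ Finset.Icc 1 N, E.δ n ^ (t + 1) * E.ν n))

/-- The remainder `E_{IP,1}(t) = E_IP(t) - E_{IP,0}(t)`. -/
def EIP1 (E : EigenData N) (t : ℝ) : ℝ := E.EIP t - E.EIP0 t

/-- The approximate inverse power halting time `T*_{IP,ε}` with `ε = N^{-α/2}`. -/
def TstarIP (E : EigenData N) (α : ℝ) : ℝ :=
  (α * Real.log N + 2 * Real.log (1 - E.δ 2 ^ ((1 : ℝ) / 2)) +
      Real.log ((E.lam 2)⁻¹ + (E.lam 1)⁻¹) + Real.log (E.ν 2)) / Real.log (E.δ 2)⁻¹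

end EigenData

end

/-!
Near its left edge `λ₋` the Marchenko–Pastur density behaves like `√(x - λ₋)`, so its
distribution function grows like `u ^ (3/2)` at `λ₋ + u`. With `B = N^(-2/3 + s/2)` this puts
`γ₁` within `B` of `λ₋` and `γ_m`, `m = ⌈N^(2s)⌉`, at least `(4c + 4) B` beyond it, so rigidity
gives `λ_m - λ₁ ≥ (4c + 1) B` while `λ₂ - λ₁ ≤ B`. As `(λ₂/λ₁)^c ≤ 1 + 2c (λ₂ - λ₁)/λ₁` in this
regime, every `λ_n` with `n ≥ m` exceeds `λ₂ (λ₂/λ₁)^c`, i.e. `δ_n ≤ δ₂^(1+c)`; hence only the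
indices `2 ≤ n < m` can satisfy `δ_n > δ₂^(1+c)`.
-/

open Real Set Filter Topology

section MarchenkoPastur

variable {d : ℝ}

lemma mpDensity_nonneg (hd0 : 0 < d) (x : ℝ) : 0 ≤ mpDensity d x := by
  unfold mpDensity
  split_ifs <;> positivity

lemma measurable_mpDensity (d : ℝ) : Measurable (mpDensity d) :=
  Measurable.ite measurableSet_Ioi (by fun_prop) measurable_const

lemma mpDensity_eq_zero_of_le {x : ℝ} (hx : x ≤ (1 - √d) ^ 2) : mpDensity d x = 0 := by
  unfold mpDensity
  split_ifs
  · rw [max_eq_right (mul_nonpos_of_nonneg_of_nonpos (by nlinarith [sqrt_nonneg d]) (by linarith)),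
      sqrt_zero, mul_zero, zero_div]
  · rfl

lemma mpLeftEdge_pos (hd1 : d < 1) : 0 < (1 - √d) ^ 2 := by
  have : √d < 1 := (sqrt_lt' one_pos).2 (by linarith)
  nlinarith

lemma exists_mpDensity_le_mul_sqrt (hd0 : 0 < d) (hd1 : d < 1) :
    ∃ C, 0 ≤ C ∧ ∀ x, mpDensity d x ≤ C * √(x - (1 - √d) ^ 2) := by
  set L := (1 - √d) ^ 2
  have hL := mpLeftEdge_pos hd1
  refine ⟨1 / (2 * π * d) * √(4 * √d) / L, by positivity, fun x => ?_⟩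
  rcases le_or_gt x L with hx | hx
  · rw [mpDensity_eq_zero_of_le hx]
    positivity
  unfold mpDensity
  rw [if_pos (hL.trans hx)]
  -- the right edge is `L + 4√d`, so the product under the root is `4√d (x - L) - (x - L)²`
  have hmax : max (((1 + √d) ^ 2 - x) * (x - L)) 0 ≤ 4 * √d * (x - L) :=
    max_le (by nlinarith) (by nlinarith [sqrt_nonneg d])
  calc 1 / (2 * π * d) * √(max (((1 + √d) ^ 2 - x) * (x - L)) 0) / x
      ≤ 1 / (2 * π * d) * √(4 * √d * (x - L)) / L := by gcongr
    _ = 1 / (2 * π * d) * √(4 * √d) / L * √(x - L) := by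
      rw [sqrt_mul (x := 4 * √d) (by positivity)]
      ring

lemma exists_mul_sqrt_le_mpDensity (hd0 : 0 < d) (hd1 : d < 1) :
    ∃ k > 0, ∀ x, (1 - √d) ^ 2 ≤ x → x ≤ (1 - √d) ^ 2 + 2 * √d →
      k * √(x - (1 - √d) ^ 2) ≤ mpDensity d x := by
  set L := (1 - √d) ^ 2
  have hL := mpLeftEdge_pos hd1
  have hsd : 0 < √d := sqrt_pos.2 hd0
  refine ⟨1 / (2 * π * d) * √(2 * √d) / (1 + √d) ^ 2, by positivity, fun x hLx hx => ?_⟩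
  unfold mpDensity
  rw [if_pos (hL.trans_le hLx)]
  have hprod : 2 * √d * (x - L) ≤ max (((1 + √d) ^ 2 - x) * (x - L)) 0 :=
    le_max_of_le_left (by nlinarith)
  calc 1 / (2 * π * d) * √(2 * √d) / (1 + √d) ^ 2 * √(x - L)
      = 1 / (2 * π * d) * √(2 * √d * (x - L)) / (1 + √d) ^ 2 := by
        rw [sqrt_mul (x := 2 * √d) (by positivity)]
        ring
    _ ≤ 1 / (2 * π * d) * √(max (((1 + √d) ^ 2 - x) * (x - L)) 0) / x := by
        gcongr
        · linarith
        · nlinarith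

lemma integrableOn_mpDensity_Iic (hd0 : 0 < d) (hd1 : d < 1) (a : ℝ) :
    IntegrableOn (mpDensity d) (Iic a) := by
  obtain ⟨C, hC, hρ⟩ := exists_mpDensity_le_mul_sqrt hd0 hd1
  refine IntegrableOn.of_forall_sdiff_eq_zero (s := Icc ((1 - √d) ^ 2) a) ?_ measurableSet_Iic
    fun x hx => mpDensity_eq_zero_of_le ?_
  · refine IntegrableOn.of_bound measure_Icc_lt_top
      (measurable_mpDensity d).aestronglyMeasurable (C * √(a - (1 - √d) ^ 2)) ?_
    filter_upwards [ae_restrict_mem measurableSet_Icc] with x hx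
    rw [norm_of_nonneg (mpDensity_nonneg hd0 x)]
    exact (hρ x).trans (by gcongr; exact hx.2)
  · by_contra h
    exact hx.2 ⟨(not_le.1 h).le, hx.1⟩

noncomputable def mpCDF (d t : ℝ) : ℝ := ∫ x in Iic t, mpDensity d x

lemma mpQuantile_eq_sInf (d : ℝ) (N n : ℕ) :
    mpQuantile d N n = sInf {t | mpCDF d t = n / N} := rfl

lemma mpCDF_eq_zero_of_le {t : ℝ} (ht : t ≤ (1 - √d) ^ 2) : mpCDF d t = 0 :=
  setIntegral_eq_zero_of_forall_eq_zero fun _ hx => mpDensity_eq_zero_of_le (le_trans hx ht)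

lemma monotone_mpCDF (hd0 : 0 < d) (hd1 : d < 1) : Monotone (mpCDF d) := fun _ b hab =>
  setIntegral_mono_set (integrableOn_mpDensity_Iic hd0 hd1 b)
    (ae_of_all _ (mpDensity_nonneg hd0)) (Set.Iic_subset_Iic.2 hab).eventuallyLE

lemma intervalIntegrable_mpDensity (hd0 : 0 < d) (hd1 : d < 1) (a b : ℝ) :
    IntervalIntegrable (mpDensity d) volume a b :=
  ((integrableOn_mpDensity_Iic hd0 hd1 (max a b)).mono_set fun _ hx => hx.2).intervalIntegrable

lemma continuous_mpCDF (hd0 : 0 < d) (hd1 : d < 1) : Continuous (mpCDF d) :=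
  continuous_iff_continuousAt.2 fun t =>
    ((integrableOn_mpDensity_Iic hd0 hd1 (t + 1)).continuousOn_Iic_primitive_Iic).continuousAt
      (Iic_mem_nhds (lt_add_one t))

lemma mpCDF_add_eq_intervalIntegral {u : ℝ} (hu : 0 ≤ u) :
    mpCDF d ((1 - √d) ^ 2 + u) = ∫ x in (1 - √d) ^ 2..(1 - √d) ^ 2 + u, mpDensity d x := by
  rw [intervalIntegral.integral_of_le (by linarith), mpCDF]
  refine setIntegral_eq_of_subset_of_forall_sdiff_eq_zero measurableSet_Iic Ioc_subset_Iic_self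
    fun x hx => mpDensity_eq_zero_of_le ?_
  by_contra h
  exact hx.2 ⟨not_le.1 h, hx.1⟩

lemma integral_sqrt_sub (a u : ℝ) :
    ∫ x in a..a + u, √(x - a) = 2 / 3 * u ^ (3 / 2 : ℝ) := by
  rw [intervalIntegral.integral_comp_sub_right (fun x => √x), sub_self, add_sub_cancel_left]
  simp_rw [sqrt_eq_rpow]
  rw [integral_rpow (Or.inl (by norm_num)), zero_rpow (by norm_num)]
  norm_num
  ring

lemma exists_mpCDF_le_rpow (hd0 : 0 < d) (hd1 : d < 1) :
    ∃ K, ∀ u, 0 ≤ u → mpCDF d ((1 - √d) ^ 2 + u) ≤ K * u ^ (3 / 2 : ℝ) := by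
  obtain ⟨C, -, hρ⟩ := exists_mpDensity_le_mul_sqrt hd0 hd1
  refine ⟨C * (2 / 3), fun u hu => ?_⟩
  rw [mpCDF_add_eq_intervalIntegral hu]
  calc ∫ x in (1 - √d) ^ 2..(1 - √d) ^ 2 + u, mpDensity d x
      ≤ ∫ x in (1 - √d) ^ 2..(1 - √d) ^ 2 + u, C * √(x - (1 - √d) ^ 2) :=
        intervalIntegral.integral_mono_on (by linarith)
          (intervalIntegrable_mpDensity hd0 hd1 _ _)
          ((by fun_prop : Continuous fun x => C * √(x - (1 - √d) ^ 2)).intervalIntegrable _ _)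
          fun x _ => hρ x
    _ = C * (2 / 3) * u ^ (3 / 2 : ℝ) := by
        rw [intervalIntegral.integral_const_mul, integral_sqrt_sub]
        ring

lemma exists_rpow_le_mpCDF (hd0 : 0 < d) (hd1 : d < 1) :
    ∃ k > 0, ∀ u, 0 ≤ u → u ≤ 2 * √d → k * u ^ (3 / 2 : ℝ) ≤ mpCDF d ((1 - √d) ^ 2 + u) := by
  obtain ⟨k, hk, hρ⟩ := exists_mul_sqrt_le_mpDensity hd0 hd1
  refine ⟨k * (2 / 3), by positivity, fun u hu hu2 => ?_⟩
  rw [mpCDF_add_eq_intervalIntegral hu]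
  calc k * (2 / 3) * u ^ (3 / 2 : ℝ)
      = ∫ x in (1 - √d) ^ 2..(1 - √d) ^ 2 + u, k * √(x - (1 - √d) ^ 2) := by
        rw [intervalIntegral.integral_const_mul, integral_sqrt_sub]
        ring
    _ ≤ ∫ x in (1 - √d) ^ 2..(1 - √d) ^ 2 + u, mpDensity d x :=
        intervalIntegral.integral_mono_on (by linarith)
          ((by fun_prop : Continuous fun x => k * √(x - (1 - √d) ^ 2)).intervalIntegrable _ _)
          (intervalIntegrable_mpDensity hd0 hd1 _ _)
          fun x hx => hρ x hx.1 (by linarith [hx.2])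

lemma mpQuantile_mem_Icc (hd0 : 0 < d) (hd1 : d < 1) {N n : ℕ} (hN : 0 < N) (hn : 0 < n)
    {a : ℝ} (ha : (1 - √d) ^ 2 ≤ a) (h : (n : ℝ) / N ≤ mpCDF d a) :
    mpQuantile d N n ∈ Icc ((1 - √d) ^ 2) a := by
  have hpos : (0 : ℝ) < n / N := by positivity
  have hlevel : ∀ t ∈ {t | mpCDF d t = n / N}, (1 - √d) ^ 2 ≤ t := fun t ht => by
    by_contra hlt
    have : mpCDF d t = 0 := mpCDF_eq_zero_of_le (not_le.1 hlt).le
    exact hpos.ne' (ht.symm.trans this)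
  obtain ⟨t, ht, hFt⟩ := intermediate_value_Icc ha (continuous_mpCDF hd0 hd1).continuousOn
    ⟨by rw [mpCDF_eq_zero_of_le le_rfl]; exact hpos.le, h⟩
  exact ⟨le_csInf ⟨t, hFt⟩ hlevel, (csInf_le ⟨_, hlevel⟩ hFt).trans ht.2⟩

/-- In `ℝ`, `sInf ∅ = 0`; an empty level set would thus put `γ_m = 0` and force `x ≤ B`. -/
lemma sub_le_of_abs_sub_mpQuantile_le (hd0 : 0 < d) (hd1 : d < 1) {N m : ℕ} {x a B : ℝ}
    (hx : |x - mpQuantile d N m| ≤ B) (hB : B < x) (ha : mpCDF d a < m / N) : a - B ≤ x := by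
  have hne : {t | mpCDF d t = m / N}.Nonempty := by
    by_contra hempty
    rw [mpQuantile_eq_sInf, not_nonempty_iff_eq_empty.1 hempty, Real.sInf_empty, sub_zero] at hx
    exact hB.not_ge ((le_abs_self x).trans hx)
  have hγ : a ≤ mpQuantile d N m := le_csInf hne fun t ht =>
    ((monotone_mpCDF hd0 hd1).reflect_lt (ha.trans_eq ht.symm)).le
  linarith [(abs_le.1 hx).1]

end MarchenkoPastur

lemma rpow_le_one_add_two_mul {x c : ℝ} (hx : 1 ≤ x) (hc : 0 ≤ c) (h : c * (x - 1) ≤ 1 / 2) :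
    x ^ c ≤ 1 + 2 * c * (x - 1) := by
  have hy : 0 ≤ c * (x - 1) := mul_nonneg hc (by linarith)
  calc x ^ c = exp (log x * c) := rpow_def_of_pos (by linarith) c
    _ ≤ exp (c * (x - 1)) :=
        exp_le_exp.2 (by nlinarith [log_le_sub_one_of_pos (by linarith : 0 < x)])
    _ ≤ 1 / (1 - c * (x - 1)) := exp_bound_div_one_sub_of_interval hy (by linarith)
    _ ≤ 1 + 2 * c * (x - 1) := by
        rw [div_le_iff₀ (by linarith)]
        nlinarith

lemma div_sq_le_rpow {a b c x : ℝ} (ha : 0 < a) (hab : a ≤ b) (hc : 0 ≤ c)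
    (hsmall : (2 * c + 1) * (b - a) ≤ a) (hx : b + 4 * c * (b - a) ≤ x) :
    (a / x) ^ 2 ≤ ((a / b) ^ 2) ^ (1 + c) := by
  have hb : 0 < b := ha.trans_le hab
  have hpow : (b / a) ^ c ≤ 1 + 2 * c * (b / a - 1) := by
    refine rpow_le_one_add_two_mul ((one_le_div ha).2 hab) hc ?_
    rw [div_sub_one ha.ne', ← mul_div_assoc, div_le_iff₀ ha]
    nlinarith
  have hba : b / a ≤ 2 := (div_le_iff₀ ha).2 (by nlinarith)
  have hgrowth : b * (b / a) ^ c ≤ x :=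
    calc b * (b / a) ^ c ≤ b * (1 + 2 * c * (b / a - 1)) := by gcongr
      _ = b + 2 * c * (b - a) * (b / a) := by field_simp
      _ ≤ b + 2 * c * (b - a) * 2 := by gcongr
      _ ≤ x := by linarith
  have hratio : a / x ≤ (a / b) ^ (1 + c) := by
    have hinv : (a / b) ^ c = ((b / a) ^ c)⁻¹ := by rw [← inv_rpow (by positivity), inv_div]
    rw [rpow_add (by positivity), rpow_one, hinv]
    calc a / x ≤ a / (b * (b / a) ^ c) := div_le_div_of_nonneg_left ha.le (by positivity) hgrowth
      _ = a / b * ((b / a) ^ c)⁻¹ := by field_simp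
  have hx0 : 0 < x := by nlinarith
  rw [← rpow_pow_comm (by positivity)]
  gcongr

namespace EigenData

variable {N : ℕ}

lemma CondR.abs_lam_sub_mpQuantile_le {d s : ℝ} {E : EigenData N} (hR : E.CondR d s) {n : ℕ}
    (hn : n ∈ Finset.Icc 1 N) : |E.lam n - mpQuantile d N n| ≤ (N : ℝ) ^ (-2 / 3 + s / 2 : ℝ) := by
  refine (hR.2.2.2.2 n hn).trans (mul_le_of_le_one_right (by positivity) ?_)
  have hmin : (1 : ℝ) ≤ ((min n (N - n + 1) : ℕ) : ℝ) := by
    exact_mod_cast le_min (Finset.mem_Icc.1 hn).1 (by omega)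
  exact rpow_le_one_of_one_le_of_nonpos hmin (by norm_num)

lemma δ_le_rpow_of_le (E : EigenData N) {c B : ℝ} {n : ℕ} (hc : 0 ≤ c) (h2n : 2 ≤ n)
    (hnN : n ≤ N) (hgap : E.lam 2 - E.lam 1 ≤ B) (hB : (2 * c + 1) * B ≤ E.lam 1)
    (hlam : E.lam 1 + (4 * c + 1) * B ≤ E.lam n) : E.δ n ≤ E.δ 2 ^ (1 + c) := by
  have h12 : E.lam 1 ≤ E.lam 2 := E.lam_mono 1 2 le_rfl (by norm_num) (by omega)
  unfold δ
  rw [← div_pow, ← div_pow]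
  exact div_sq_le_rpow E.lam_pos h12 hc
    (by nlinarith [mul_le_mul_of_nonneg_left hgap (by linarith : 0 ≤ 2 * c + 1)])
    (by nlinarith [mul_le_mul_of_nonneg_left hgap (by linarith : 0 ≤ 4 * c + 1)])

lemma card_filter_δ_lt_le (E : EigenData N) {c B : ℝ} {m : ℕ} (hc : 0 ≤ c) (hm : 2 ≤ m)
    (hgap : E.lam 2 - E.lam 1 ≤ B) (hB : (2 * c + 1) * B ≤ E.lam 1)
    (hlam : E.lam 1 + (4 * c + 1) * B ≤ E.lam m) :
    ((Finset.Icc 2 N).filter (fun n => E.δ 2 ^ (1 + c : ℝ) < E.δ n)).card ≤ m - 2 := by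
  calc _ ≤ (Finset.Ico 2 m).card := Finset.card_le_card fun n hn => ?_
    _ = m - 2 := Nat.card_Ico 2 m
  obtain ⟨hn, hδ⟩ := Finset.mem_filter.1 hn
  obtain ⟨h2n, hnN⟩ := Finset.mem_Icc.1 hn
  refine Finset.mem_Ico.2 ⟨h2n, not_le.1 fun hmn => hδ.not_ge ?_⟩
  exact E.δ_le_rpow_of_le hc h2n hnN hgap hB (hlam.trans (E.lam_mono m n (by omega) hmn hnN))

lemma card_filter_δ_lt_le_of_rigid {d : ℝ} (hd0 : 0 < d) (hd1 : d < 1) (E : EigenData N)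
    {c B : ℝ} {m : ℕ} (hc : 0 ≤ c) (hB : 0 < B) (hm : 2 ≤ m) (hmN : m ≤ N)
    (hrig : ∀ n ∈ Finset.Icc 1 N, |E.lam n - mpQuantile d N n| ≤ B)
    (hgap : E.lam 2 - E.lam 1 ≤ B) (hBL : (2 * c + 3) * B ≤ (1 - √d) ^ 2)
    (h₁ : 1 / N ≤ mpCDF d ((1 - √d) ^ 2 + B))
    (hₘ : mpCDF d ((1 - √d) ^ 2 + (4 * c + 4) * B) < m / N) :
    ((Finset.Icc 2 N).filter (fun n => E.δ 2 ^ (1 + c : ℝ) < E.δ n)).card ≤ m - 2 := by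
  have hγ₁ := mpQuantile_mem_Icc hd0 hd1 (N := N) (n := 1) (by omega) one_pos
    (le_add_of_nonneg_right hB.le) (by rwa [Nat.cast_one])
  have hlam₁ := abs_le.1 (hrig 1 (Finset.mem_Icc.2 ⟨le_rfl, by omega⟩))
  have hlamₘ : E.lam 1 ≤ E.lam m := E.lam_mono 1 m le_rfl (by omega) hmN
  have hγₘ := sub_le_of_abs_sub_mpQuantile_le hd0 hd1
    (hrig m (Finset.mem_Icc.2 ⟨by omega, hmN⟩)) (by linarith [hγ₁.1, mul_nonneg hc hB.le]) hₘ
  exact E.card_filter_δ_lt_le hc hm hgap (by linarith [hγ₁.1]) (by linarith [hγ₁.2])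

end EigenData

lemma eventually_edge_scale_bounds {s ε k K : ℝ} (hs0 : 0 < s) (hs1 : s < 4 / 3) (hε : 0 < ε)
    (hk : 0 < k) :
    ∀ᶠ N : ℕ in atTop, (N : ℝ) ^ (-2 / 3 + s / 2 : ℝ) ≤ ε ∧
      1 / N ≤ k * ((N : ℝ) ^ (-2 / 3 + s / 2 : ℝ)) ^ (3 / 2 : ℝ) ∧
      K * ((N : ℝ) ^ (-2 / 3 + s / 2 : ℝ)) ^ (3 / 2 : ℝ) < (N : ℝ) ^ (2 * s) / N := by
  have hN := tendsto_natCast_atTop_atTop (R := ℝ)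
  have hB : Tendsto (fun N : ℕ => (N : ℝ) ^ (-2 / 3 + s / 2 : ℝ)) atTop (𝓝 0) := by
    refine ((tendsto_rpow_neg_atTop (by linarith : 0 < 2 / 3 - s / 2)).comp hN).congr fun N => ?_
    simp only [Function.comp_apply]
    ring_nf
  filter_upwards [hB.eventually (ge_mem_nhds hε),
    ((tendsto_rpow_atTop (by positivity : 0 < 3 * s / 4)).comp hN).eventually_ge_atTop (1 / k),
    ((tendsto_rpow_atTop (by positivity : 0 < 5 * s / 4)).comp hN).eventually_gt_atTop K,
    eventually_gt_atTop 0] with N hBε hsmall hlarge hN0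
  simp only [Function.comp_apply] at hsmall hlarge
  have hN0' : (0 : ℝ) < N := Nat.cast_pos.2 hN0
  have hpow : ((N : ℝ) ^ (-2 / 3 + s / 2 : ℝ)) ^ (3 / 2 : ℝ) = (N : ℝ) ^ (3 * s / 4) / N := by
    rw [← rpow_mul hN0'.le, show (-2 / 3 + s / 2) * (3 / 2) = 3 * s / 4 - 1 by ring,
      rpow_sub hN0', rpow_one]
  have hsplit : (N : ℝ) ^ (2 * s) = (N : ℝ) ^ (3 * s / 4) * (N : ℝ) ^ (5 * s / 4) := by
    rw [← rpow_add hN0']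
    ring_nf
  refine ⟨hBε, ?_, ?_⟩
  · rw [hpow, mul_div_assoc']
    exact div_le_div_of_nonneg_right ((div_le_iff₀' hk).1 hsmall) hN0'.le
  · rw [hpow, mul_div_assoc', hsplit]
    exact div_lt_div_of_pos_right (by nlinarith [rpow_pos_of_pos hN0' (3 * s / 4)]) hN0'

theorem card_Ic_compl_le_general (d σ s c : ℝ)
    (hd0 : 0 < d) (hd1 : d < 1)
    (hσ1 : σ < 1 / 3)
    (hs0 : 0 < s) (hs1 : s < σ / 40)
    (hc0 : 0 < c) :
    ∃ N₀ : ℕ, ∀ N : ℕ, N₀ ≤ N → ∀ E : EigenData N, E.CondR d s →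
      (((Finset.Icc 2 N).filter (fun n => E.δ 2 ^ (1 + c : ℝ) < E.δ n)).card : ℝ) ≤
        (N : ℝ) ^ (2 * s) := by
  obtain ⟨k, hk, hkF⟩ := exists_rpow_le_mpCDF hd0 hd1
  obtain ⟨K, hKF⟩ := exists_mpCDF_le_rpow hd0 hd1
  have hε : 0 < min (2 * √d) ((1 - √d) ^ 2 / (2 * c + 3)) :=
    lt_min (by positivity) (div_pos (mpLeftEdge_pos hd1) (by positivity))
  obtain ⟨N₀, hN₀⟩ := eventually_atTop.1 ((eventually_ge_atTop 2).and
    (eventually_edge_scale_bounds (K := K * (4 * c + 4) ^ (3 / 2 : ℝ)) hs0 (by linarith) hε hk))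
  refine ⟨N₀, fun N hN E hR => ?_⟩
  obtain ⟨hN2, hBε, hB₁, hBₘ⟩ := hN₀ N hN
  set B := (N : ℝ) ^ (-2 / 3 + s / 2 : ℝ)
  set m := ⌈(N : ℝ) ^ (2 * s)⌉₊
  have hN1 : (1 : ℝ) < N := by exact_mod_cast hN2
  have hm : 2 ≤ m := Nat.lt_ceil.2 (by exact_mod_cast one_lt_rpow hN1 (by positivity))
  have hmN : m ≤ N := Nat.ceil_le.2 (rpow_le_self_of_one_le hN1.le (by linarith))
  have hcard := E.card_filter_δ_lt_le_of_rigid hd0 hd1 hc0.le (by positivity) hm hmN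
    (fun n hn => hR.abs_lam_sub_mpQuantile_le hn) (hR.2.2.2.1 2 (by simp)).2
    (by rw [← le_div_iff₀' (by positivity)]; exact hBε.trans (min_le_right _ _))
    (hB₁.trans (hkF B (by positivity) (hBε.trans (min_le_left _ _))))
    (calc _ ≤ K * ((4 * c + 4) * B) ^ (3 / 2 : ℝ) := hKF _ (by positivity)
      _ < (N : ℝ) ^ (2 * s) / N := by rwa [mul_rpow (by positivity) (by positivity), ← mul_assoc]
      _ ≤ m / N := by gcongr; exact Nat.le_ceil _)
  calc _ ≤ ((m - 2 : ℕ) : ℝ) := by exact_mod_cast hcard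
    _ ≤ (N : ℝ) ^ (2 * s) := by
      rw [Nat.cast_sub hm, Nat.cast_two]
      linarith [Nat.ceil_lt_add_one (rpow_nonneg (Nat.cast_nonneg N) (2 * s))]

/-- Lemma on the cardinality of `I_c^c`: given Condition R(N,s), the number of indices
`2 ≤ n ≤ N` with `δ_n > δ₂^{1+c}` is at most `N^{2s}`. -/
theorem card_Ic_compl_le (d σ s c : ℝ)
    (hd0 : 0 < d) (hd1 : d < 1)
    (hσ0 : 0 < σ) (hσ1 : σ < 1 / 3)
    (hs0 : 0 < s) (hs1 : s < σ / 40)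
    (hc0 : 0 < c) (hc1 : c < 10 / σ) :
    ∃ N₀ : ℕ, ∀ N : ℕ, N₀ ≤ N → ∀ E : EigenData N, E.CondR d s →
      (((Finset.Icc 2 N).filter (fun n => E.δ 2 ^ (1 + c : ℝ) < E.δ n)).card : ℝ) ≤
        (N : ℝ) ^ (2 * s) :=
  card_Ic_compl_le_general d σ s c hd0 hd1 hσ1 hs0 hs1 hc0
end

section
/- Let 0 < σ < 1/3, α ≥ 10/3 + σ, 0 < s < σ/40. There exist a constant C > 0 and N₀ ∈ ℕ such that for all N ≥ N₀, every eigen-data configuration of size N satisfying Condition R(N,s), and every real t in the interval L̂_α = [(α − 4/3 − 5s) log N/log δ₂^{−1}, (α − 4/3 + 6s) log N/log δ₂^{−1}], the function E_{IP,0} is differentiable at t and −E_{IP,0}′(t) ≥ C N^{−11s − 2/3 − α}. -/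
open Finset MeasureTheory
open scoped Classical

/-!
Write `E_{IP,0}(t) = A(t) / ((1 + R(t)) (1 + R(t+1)))` with `A(t) = ∑_{n ≥ 2} c_n δ_n^t ν_n`,
`c_n = (1 - δ_n)(λ₁⁻¹ - λ_n⁻¹)` and `R(t) = ∑_{n ≥ 2} δ_n^t ν_n`, all `δ_n ≤ δ₂ < 1` for `n ≥ 2`.
Put `ℓ = log δ₂⁻¹`. On the window `L̂_α` we have `δ₂^t ≤ N^{4/3+5s-α}`, while
`∑ ν_n = β₁⁻² ≤ N^{1+s}`, so `R ≤ 1/8`; and `tℓ ≥ 1`, so `L ↦ L e^{-tL}` is decreasing on `L ≥ ℓ`,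
which gives `-R' ≤ ℓ/8`. In the quotient rule the term `-A' ≥ ℓ A` therefore dominates and
`-E_{IP,0}'(t) ≥ -A'(t)/32 ≥ c₂ ℓ δ₂^t ν₂ / 32`. Finally the edge gap `λ₂ - λ₁ ≥ N^{-2/3-s/2}`,
the bound `λ₂ ≤ (1 + √d)² + 1` coming from rigidity, `δ₂^t ≥ N^{4/3-6s-α}` and `ν₂ ≥ N^{-2s}`
give `c₂ ℓ δ₂^t ν₂ ≥ 2 N^{-2/3-19s/2-α} / ((1 + √d)² + 1)⁴`.
-/

open Real

namespace Real

theorem rpow_eq_exp_neg_mul_log_inv {x : ℝ} (hx : 0 < x) (u : ℝ) :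
    x ^ u = exp (-(u * log x⁻¹)) := by
  rw [rpow_def_of_pos hx, log_inv]; ring_nf

theorem rpow_le_rpow_neg_iff {y M : ℝ} (hy : 0 < y) (hM : 0 < M) (t a : ℝ) :
    y ^ t ≤ M ^ (-a) ↔ a * log M ≤ t * log y⁻¹ := by
  rw [rpow_eq_exp_neg_mul_log_inv hy, rpow_def_of_pos hM, exp_le_exp]
  constructor <;> intro h <;> linarith

theorem rpow_neg_le_rpow_iff {y M : ℝ} (hy : 0 < y) (hM : 0 < M) (t b : ℝ) :
    M ^ (-b) ≤ y ^ t ↔ t * log y⁻¹ ≤ b * log M := by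
  rw [rpow_eq_exp_neg_mul_log_inv hy, rpow_def_of_pos hM, exp_le_exp]
  constructor <;> intro h <;> linarith

theorem log_inv_mul_rpow_le {x y u : ℝ} (hx : 0 < x) (hxy : x ≤ y) (hu0 : 0 ≤ u)
    (hu : 1 ≤ u * log y⁻¹) : log x⁻¹ * x ^ u ≤ log y⁻¹ * y ^ u := by
  have hy : 0 < y := hx.trans_le hxy
  set a := log x⁻¹
  set b := log y⁻¹
  have hab : b ≤ a := log_le_log (inv_pos.2 hy) (inv_anti₀ hx hxy)
  have hb : 0 ≤ b := by nlinarith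
  -- `L ↦ L e^{-uL}` decreases on `L ≥ 1/u`, by `1 + z ≤ e^z`.
  have hexp : a ≤ b * exp (u * (a - b)) :=
    calc a ≤ b * (u * (a - b) + 1) := by
          nlinarith [mul_nonneg (sub_nonneg.2 hu) (sub_nonneg.2 hab)]
      _ ≤ b * exp (u * (a - b)) := by gcongr; exact add_one_le_exp _
  rw [rpow_eq_exp_neg_mul_log_inv hx, rpow_eq_exp_neg_mul_log_inv hy]
  calc a * exp (-(u * a)) ≤ b * exp (u * (a - b)) * exp (-(u * a)) := by gcongr
    _ = b * exp (-(u * b)) := by rw [mul_assoc, ← exp_add]; ring_nf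

end Real

theorem div_thirty_two_le_quotient_rule_numerator {A P D₀ D₁ Q₀ Q₁ ℓ : ℝ} (hA : 0 ≤ A)
    (hℓ : 0 ≤ ℓ) (hP : ℓ * A ≤ P) (hD₀ : 1 ≤ D₀) (hD₀' : D₀ ≤ 2) (hD₁ : 1 ≤ D₁) (hD₁' : D₁ ≤ 2)
    (hQ₀ : Q₀ ≤ ℓ / 8) (hQ₁ : Q₁ ≤ ℓ / 8) :
    P / 32 ≤ (P * (D₀ * D₁) - A * (Q₀ * D₁ + D₀ * Q₁)) / (D₀ * D₁) ^ 2 := by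
  have hD : 1 ≤ D₀ * D₁ := one_le_mul_of_one_le_of_one_le hD₀ hD₁
  have hD' : D₀ * D₁ ≤ 4 := by nlinarith
  have hQ : Q₀ * D₁ + D₀ * Q₁ ≤ ℓ / 2 := by nlinarith
  have hnum : P / 2 ≤ P * (D₀ * D₁) - A * (Q₀ * D₁ + D₀ * Q₁) := by
    have hP₀ : 0 ≤ P := (mul_nonneg hℓ hA).trans hP
    nlinarith [le_mul_of_one_le_right hP₀ hD, mul_le_mul_of_nonneg_left hQ hA]
  calc P / 32 = P / 2 / 16 := by ring
    _ ≤ (P * (D₀ * D₁) - A * (Q₀ * D₁ + D₀ * Q₁)) / 16 := by gcongr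
    _ ≤ _ := div_le_div_of_nonneg_left (by nlinarith) (by positivity) (by nlinarith)

section ExpSum

variable {ι : Type*} {s : Finset ι} {c x w : ι → ℝ} {y t u : ℝ}

theorem hasDerivAt_sum_mul_rpow_mul (hx : ∀ i ∈ s, 0 < x i) (t : ℝ) :
    HasDerivAt (fun u => ∑ i ∈ s, c i * x i ^ u * w i)
      (-∑ i ∈ s, c i * log (x i)⁻¹ * x i ^ t * w i) t := by
  rw [← Finset.sum_neg_distrib]
  refine HasDerivAt.fun_sum fun i hi => ?_
  exact (((hasStrictDerivAt_const_rpow (hx i hi) t).hasDerivAt.const_mul (c i)).mul_const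
    (w i)).congr_deriv (by rw [log_inv]; ring)

theorem sum_rpow_mul_le (hx : ∀ i ∈ s, 0 < x i ∧ x i ≤ y) (hw : ∀ i ∈ s, 0 ≤ w i)
    (hy : y ≤ 1) (ht : 0 ≤ t) (htu : t ≤ u) :
    ∑ i ∈ s, x i ^ u * w i ≤ y ^ t * ∑ i ∈ s, w i := by
  rw [Finset.mul_sum]
  refine Finset.sum_le_sum fun i hi => mul_le_mul_of_nonneg_right ?_ (hw i hi)
  obtain ⟨hx0, hxy⟩ := hx i hi
  calc x i ^ u ≤ x i ^ t := rpow_le_rpow_of_exponent_ge hx0 (hxy.trans hy) htu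
    _ ≤ y ^ t := rpow_le_rpow hx0.le hxy ht

theorem sum_log_inv_mul_rpow_mul_le (hx : ∀ i ∈ s, 0 < x i ∧ x i ≤ y) (hw : ∀ i ∈ s, 0 ≤ w i)
    (hy : y ≤ 1) (ht : 0 ≤ t) (hlog : 1 ≤ t * log y⁻¹) (htu : t ≤ u) :
    ∑ i ∈ s, log (x i)⁻¹ * x i ^ u * w i ≤ log y⁻¹ * (y ^ t * ∑ i ∈ s, w i) := by
  have hℓ : 0 ≤ log y⁻¹ := by nlinarith
  rw [Finset.mul_sum, Finset.mul_sum]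
  refine Finset.sum_le_sum fun i hi => ?_
  obtain ⟨hx0, hxy⟩ := hx i hi
  have hy0 : 0 < y := hx0.trans_le hxy
  calc log (x i)⁻¹ * x i ^ u * w i ≤ log y⁻¹ * y ^ u * w i :=
        mul_le_mul_of_nonneg_right (log_inv_mul_rpow_le hx0 hxy (ht.trans htu)
          (hlog.trans (by gcongr))) (hw i hi)
    _ ≤ log y⁻¹ * y ^ t * w i :=
        mul_le_mul_of_nonneg_right (mul_le_mul_of_nonneg_left
          (rpow_le_rpow_of_exponent_ge hy0 hy htu) hℓ) (hw i hi)
    _ = log y⁻¹ * (y ^ t * w i) := mul_assoc _ _ _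

theorem mul_sum_le_sum_mul_log_inv (hx : ∀ i ∈ s, 0 < x i ∧ x i ≤ y) (hw : ∀ i ∈ s, 0 ≤ w i)
    (hc : ∀ i ∈ s, 0 ≤ c i) :
    log y⁻¹ * ∑ i ∈ s, c i * x i ^ t * w i ≤ ∑ i ∈ s, c i * log (x i)⁻¹ * x i ^ t * w i := by
  rw [Finset.mul_sum]
  refine Finset.sum_le_sum fun i hi => ?_
  obtain ⟨hx0, hxy⟩ := hx i hi
  have hlog : log y⁻¹ ≤ log (x i)⁻¹ :=
    log_le_log (inv_pos.2 (hx0.trans_le hxy)) (inv_anti₀ hx0 hxy)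
  have := mul_nonneg (mul_nonneg (hc i hi) (rpow_nonneg hx0.le t)) (hw i hi)
  nlinarith

noncomputable def expSumRatio (s : Finset ι) (c x w : ι → ℝ) (u : ℝ) : ℝ :=
  (∑ i ∈ s, c i * x i ^ u * w i) /
    ((1 + ∑ i ∈ s, x i ^ u * w i) * (1 + ∑ i ∈ s, x i ^ (u + 1) * w i))

theorem neg_deriv_expSumRatio_ge (hx : ∀ i ∈ s, 0 < x i ∧ x i ≤ y) (hw : ∀ i ∈ s, 0 ≤ w i)
    (hc : ∀ i ∈ s, 0 ≤ c i) (hy : y ≤ 1) (ht : 0 ≤ t) (hlog : 1 ≤ t * log y⁻¹)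
    (hsmall : y ^ t * ∑ i ∈ s, w i ≤ 1 / 8) :
    DifferentiableAt ℝ (expSumRatio s c x w) t ∧
      (∑ i ∈ s, c i * log (x i)⁻¹ * x i ^ t * w i) / 32 ≤ -deriv (expSumRatio s c x w) t := by
  have hx₀ : ∀ i ∈ s, 0 < x i := fun i hi => (hx i hi).1
  have hℓ : 0 ≤ log y⁻¹ := by nlinarith
  have hR (v : ℝ) : HasDerivAt (fun u => ∑ i ∈ s, x i ^ u * w i)
      (-∑ i ∈ s, log (x i)⁻¹ * x i ^ v * w i) v := by
    simpa using hasDerivAt_sum_mul_rpow_mul (c := fun _ => 1) (w := w) hx₀ v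
  have hR_nonneg (v : ℝ) : 0 ≤ ∑ i ∈ s, x i ^ v * w i :=
    Finset.sum_nonneg fun i hi => mul_nonneg (rpow_nonneg (hx₀ i hi).le v) (hw i hi)
  have hR_le {v : ℝ} (hv : t ≤ v) : ∑ i ∈ s, x i ^ v * w i ≤ 1 :=
    (sum_rpow_mul_le hx hw hy ht hv).trans (by linarith)
  have hQ_le {v : ℝ} (hv : t ≤ v) : ∑ i ∈ s, log (x i)⁻¹ * x i ^ v * w i ≤ log y⁻¹ / 8 :=
    (sum_log_inv_mul_rpow_mul_le hx hw hy ht hlog hv).trans (by nlinarith)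
  have ht₁ : t ≤ t + 1 := by linarith
  have hF : HasDerivAt (expSumRatio s c x w) _ t :=
    (hasDerivAt_sum_mul_rpow_mul (c := c) (w := w) hx₀ t).fun_div
    (((hR t).const_add 1).fun_mul (((hR (t + 1)).comp_add_const t 1).const_add 1))
    (by nlinarith [hR_nonneg t, hR_nonneg (t + 1)])
  refine ⟨hF.differentiableAt, ?_⟩
  rw [hF.deriv]
  convert div_thirty_two_le_quotient_rule_numerator
    (Finset.sum_nonneg fun i hi => mul_nonneg (mul_nonneg (hc i hi)
      (rpow_nonneg (hx₀ i hi).le t)) (hw i hi))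
    hℓ (mul_sum_le_sum_mul_log_inv hx hw hc) (le_add_of_nonneg_right (hR_nonneg t))
    (by linarith [hR_le le_rfl]) (le_add_of_nonneg_right (hR_nonneg (t + 1)))
    (by linarith [hR_le ht₁]) (hQ_le le_rfl) (hQ_le ht₁) using 1
  ring

end ExpSum

theorem mpDensity_eq_zero_of_lt {d x : ℝ} (hx : (1 + √d) ^ 2 < x) : mpDensity d x = 0 := by
  have hd := sqrt_nonneg d
  have hneg : ((1 + √d) ^ 2 - x) * (x - (1 - √d) ^ 2) ≤ 0 :=
    mul_nonpos_of_nonpos_of_nonneg (by linarith) (by nlinarith)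
  rw [mpDensity, if_pos ((sq_nonneg _).trans_lt hx), max_eq_right hneg, sqrt_zero, mul_zero,
    zero_div]

theorem setIntegral_Iic_min_mpDensity (d t : ℝ) :
    ∫ x in Set.Iic (min t ((1 + √d) ^ 2)), mpDensity d x = ∫ x in Set.Iic t, mpDensity d x := by
  have hsupp : (Set.Iic ((1 + √d) ^ 2)).indicator (mpDensity d) = mpDensity d := by
    refine Set.indicator_eq_self.2 fun x hx => ?_
    by_contra hlt
    exact hx (mpDensity_eq_zero_of_lt (not_le.1 hlt))
  conv_rhs => rw [← hsupp, setIntegral_indicator measurableSet_Iic, Set.Iic_inter_Iic]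

theorem mpQuantile_le (d : ℝ) (N n : ℕ) : mpQuantile d N n ≤ (1 + √d) ^ 2 := by
  set S := {t : ℝ | (∫ x in Set.Iic t, mpDensity d x) = (n : ℝ) / N}
  change sInf S ≤ _
  by_cases hS : BddBelow S
  · rcases S.eq_empty_or_nonempty with hempty | ⟨t₀, ht₀⟩
    · rw [hempty, Real.sInf_empty]; positivity
    · have hmin : min t₀ ((1 + √d) ^ 2) ∈ S := by
        show (∫ x in Set.Iic (min t₀ _), mpDensity d x) = _
        rw [setIntegral_Iic_min_mpDensity]
        exact ht₀
      exact (csInf_le hS hmin).trans (min_le_right _ _)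
  · rw [Real.sInf_of_not_bddBelow hS]; positivity

namespace EigenData

variable {N : ℕ} (E : EigenData N)

theorem lam_pos_of_mem {n : ℕ} (hn : n ∈ Finset.Icc 1 N) : 0 < E.lam n :=
  E.lam_pos.trans_le (E.lam_mono 1 n le_rfl (Finset.mem_Icc.1 hn).1 (Finset.mem_Icc.1 hn).2)

theorem δ_one : E.δ 1 = 1 := div_self (pow_pos E.lam_pos 2).ne'

theorem ν_one : E.ν 1 = 1 := div_self (pow_pos E.beta_one_pos 2).ne'

theorem ν_nonneg (n : ℕ) : 0 ≤ E.ν n := by unfold ν; positivity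

theorem δ_pos {n : ℕ} (hn : n ∈ Finset.Icc 1 N) : 0 < E.δ n :=
  div_pos (pow_pos E.lam_pos 2) (pow_pos (E.lam_pos_of_mem hn) 2)

theorem δ_antitone {m n : ℕ} (hm : 1 ≤ m) (hmn : m ≤ n) (hn : n ≤ N) : E.δ n ≤ E.δ m := by
  have hm₀ := E.lam_pos_of_mem (Finset.mem_Icc.2 ⟨hm, hmn.trans hn⟩)
  exact div_le_div_of_nonneg_left (sq_nonneg _) (pow_pos hm₀ 2)
    (pow_le_pow_left₀ hm₀.le (E.lam_mono m n hm hmn hn) 2)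

theorem δ_le_one {n : ℕ} (hn : n ∈ Finset.Icc 1 N) : E.δ n ≤ 1 :=
  E.δ_one ▸ E.δ_antitone le_rfl (Finset.mem_Icc.1 hn).1 (Finset.mem_Icc.1 hn).2

theorem sum_ν : ∑ n ∈ Finset.Icc 1 N, E.ν n = (E.beta 1 ^ 2)⁻¹ := by
  simp only [ν, div_eq_mul_inv, ← Finset.sum_mul, E.beta_norm, one_mul]

theorem EIP0_eq_expSumRatio (hN : 1 ≤ N) :
    E.EIP0 = expSumRatio (Finset.Icc 2 N) (fun n => (1 - E.δ n) * ((E.lam 1)⁻¹ - (E.lam n)⁻¹))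
      E.δ E.ν := by
  have hsplit (f : ℕ → ℝ) : ∑ n ∈ Finset.Icc 1 N, f n = f 1 + ∑ n ∈ Finset.Icc 2 N, f n := by
    rw [← Finset.insert_Icc_add_one_left_eq_Icc hN, Finset.sum_insert (by simp)]
    rfl
  funext u
  simp only [EIP0, expSumRatio, hsplit, δ_one, ν_one, one_rpow, one_mul]

theorem neg_deriv_EIP0_ge (hN : 2 ≤ N) {t : ℝ} (ht : 0 ≤ t) (hlog : 1 ≤ t * log (E.δ 2)⁻¹)
    (hsmall : E.δ 2 ^ t ≤ E.beta 1 ^ 2 / 8) :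
    DifferentiableAt ℝ E.EIP0 t ∧
      (1 - E.δ 2) * ((E.lam 1)⁻¹ - (E.lam 2)⁻¹) * log (E.δ 2)⁻¹ * E.δ 2 ^ t * E.ν 2 / 32
        ≤ -deriv E.EIP0 t := by
  have hcoeff (n : ℕ) (hn : n ∈ Finset.Icc 2 N) :
      0 ≤ (1 - E.δ n) * ((E.lam 1)⁻¹ - (E.lam n)⁻¹) := by
    obtain ⟨h2n, hnN⟩ := Finset.mem_Icc.1 hn
    have hδ := E.δ_le_one (Finset.mem_Icc.2 ⟨by omega, hnN⟩)
    have hlam := inv_anti₀ E.lam_pos (E.lam_mono 1 n le_rfl (by omega) hnN)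
    exact mul_nonneg (by linarith) (by linarith)
  have hsum : E.δ 2 ^ t * ∑ n ∈ Finset.Icc 2 N, E.ν n ≤ 1 / 8 :=
    calc E.δ 2 ^ t * ∑ n ∈ Finset.Icc 2 N, E.ν n ≤ E.beta 1 ^ 2 / 8 * (E.beta 1 ^ 2)⁻¹ := by
          rw [← E.sum_ν]
          exact mul_le_mul hsmall (Finset.sum_le_sum_of_subset_of_nonneg
            (Finset.Icc_subset_Icc_left one_le_two) fun n _ _ => E.ν_nonneg n)
            (Finset.sum_nonneg fun n _ => E.ν_nonneg n) (by positivity)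
      _ = 1 / 8 := by field_simp [E.beta_one_pos.ne']
  rw [E.EIP0_eq_expSumRatio (by omega)]
  obtain ⟨hdiff, hderiv⟩ := neg_deriv_expSumRatio_ge
    (fun n hn => ⟨E.δ_pos (Finset.Icc_subset_Icc_left one_le_two hn),
      E.δ_antitone one_le_two (Finset.mem_Icc.1 hn).1 (Finset.mem_Icc.1 hn).2⟩)
    (fun n _ => E.ν_nonneg n) hcoeff (E.δ_le_one (Finset.mem_Icc.2 ⟨one_le_two, hN⟩)) ht hlog hsum
  refine ⟨hdiff, le_trans ?_ hderiv⟩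
  gcongr
  refine Finset.single_le_sum (f := fun n =>
    (1 - E.δ n) * ((E.lam 1)⁻¹ - (E.lam n)⁻¹) * log (E.δ n)⁻¹ * E.δ n ^ t * E.ν n)
    (fun n hn => ?_) (Finset.mem_Icc.2 ⟨le_rfl, hN⟩)
  have hn₁ := Finset.Icc_subset_Icc_left one_le_two hn
  exact mul_nonneg (mul_nonneg (mul_nonneg (hcoeff n hn)
    (log_nonneg ((one_le_inv₀ (E.δ_pos hn₁)).2 (E.δ_le_one hn₁))))
    (rpow_nonneg (E.δ_pos hn₁).le t)) (E.ν_nonneg n)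

theorem two_mul_gap_pow_three_div_le {K : ℝ} (h12 : E.lam 1 ≤ E.lam 2) (hK : E.lam 2 ≤ K) :
    2 * (E.lam 2 - E.lam 1) ^ 3 / K ^ 4
      ≤ (1 - E.δ 2) * ((E.lam 1)⁻¹ - (E.lam 2)⁻¹) * log (E.δ 2)⁻¹ := by
  have h₁ := E.lam_pos
  have h₂ : 0 < E.lam 2 := h₁.trans_le h12
  have hK₀ : 0 < K := h₂.trans_le hK
  have hg : 0 ≤ E.lam 2 - E.lam 1 := sub_nonneg.2 h12
  have hrel : (E.lam 2 - E.lam 1) / K ≤ 1 - E.lam 1 / E.lam 2 := by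
    rw [one_sub_div h₂.ne']
    exact div_le_div_of_nonneg_left hg h₂ hK
  have hδ : (E.lam 2 - E.lam 1) / K ≤ 1 - E.δ 2 := by
    refine hrel.trans ?_
    rw [δ, ← div_pow]
    have : E.lam 1 / E.lam 2 ≤ 1 := (div_le_one h₂).2 h12
    nlinarith [div_pos h₁ h₂]
  have hinv : (E.lam 2 - E.lam 1) / K ^ 2 ≤ (E.lam 1)⁻¹ - (E.lam 2)⁻¹ := by
    rw [inv_sub_inv h₁.ne' h₂.ne']
    exact div_le_div_of_nonneg_left hg (by positivity) (by nlinarith)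
  have hlog : 2 * ((E.lam 2 - E.lam 1) / K) ≤ log (E.δ 2)⁻¹ := by
    have hδ_inv : (E.δ 2)⁻¹ = (E.lam 2 / E.lam 1) ^ 2 := by rw [δ, inv_div, div_pow]
    rw [hδ_inv, log_pow, Nat.cast_ofNat]
    have := one_sub_inv_le_log_of_pos (div_pos h₂ h₁)
    rw [inv_div] at this
    linarith
  calc 2 * (E.lam 2 - E.lam 1) ^ 3 / K ^ 4
      = (E.lam 2 - E.lam 1) / K * ((E.lam 2 - E.lam 1) / K ^ 2) *
          (2 * ((E.lam 2 - E.lam 1) / K)) := by field_simp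
    _ ≤ _ := by
      have hδ₀ := (div_nonneg hg hK₀.le).trans hδ
      have hinv₀ := (div_nonneg hg (by positivity)).trans hinv
      exact mul_le_mul (mul_le_mul hδ hinv (by positivity) hδ₀) hlog (by positivity)
        (mul_nonneg hδ₀ hinv₀)

end EigenData

namespace EigenData.CondR

variable {N : ℕ} {E : EigenData N} {d s : ℝ}

theorem lam_le (hR : E.CondR d s) (hs : s < 4 / 3) {n : ℕ} (hn : n ∈ Finset.Icc 1 N) :
    E.lam n ≤ (1 + √d) ^ 2 + 1 := by
  obtain ⟨h1n, hnN⟩ := Finset.mem_Icc.1 hn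
  have hN : (1 : ℝ) ≤ N := by exact_mod_cast h1n.trans hnN
  have hm : (1 : ℝ) ≤ ((min n (N - n + 1) : ℕ) : ℝ) := by exact_mod_cast le_min h1n (by omega)
  have herr : (N : ℝ) ^ (-2 / 3 + s / 2 : ℝ) * ((min n (N - n + 1) : ℕ) : ℝ) ^ (-1 / 3 : ℝ) ≤ 1 :=
    mul_le_one₀ (rpow_le_one_of_one_le_of_nonpos hN (by linarith)) (rpow_nonneg (by positivity) _)
      (rpow_le_one_of_one_le_of_nonpos hm (by norm_num))
  linarith [(abs_le.1 ((hR.2.2.2.2 n hn).trans herr)).2, mpQuantile_le d N n]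

theorem rpow_le_gap (hR : E.CondR d s) : (N : ℝ) ^ (-2 / 3 - s / 2 : ℝ) ≤ E.lam 2 - E.lam 1 :=
  (hR.2.2.2.1 2 (by simp)).1

theorem rpow_le_beta_sq (hR : E.CondR d s) {n : ℕ} (hn : n ∈ ({1, 2, N - 1, N} : Set ℕ)) :
    (N : ℝ) ^ (-1 - s : ℝ) ≤ E.beta n ^ 2 := by
  rw [show (-1 - s : ℝ) = (-1 / 2 - s / 2) * (2 : ℕ) by push_cast; ring,
    rpow_mul_natCast (Nat.cast_nonneg N)]
  exact pow_le_pow_left₀ (rpow_nonneg (Nat.cast_nonneg N) _) (hR.2.1 n hn) 2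

theorem beta_sq_le (hR : E.CondR d s) {n : ℕ} (hn : n ∈ Finset.Icc 1 N) :
    E.beta n ^ 2 ≤ (N : ℝ) ^ (-1 + s : ℝ) := by
  rw [show (-1 + s : ℝ) = (-1 / 2 + s / 2) * (2 : ℕ) by push_cast; ring,
    rpow_mul_natCast (Nat.cast_nonneg N)]
  exact pow_le_pow_left₀ (E.beta_nonneg n (Finset.mem_Icc.1 hn).1 (Finset.mem_Icc.1 hn).2)
    (hR.1 n hn) 2

theorem rpow_le_ν_two (hR : E.CondR d s) (hN : 1 ≤ N) : (N : ℝ) ^ (-2 * s) ≤ E.ν 2 := by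
  have hN₀ : (0 : ℝ) < N := by exact_mod_cast hN
  rw [show -2 * s = (-1 - s) - (-1 + s) by ring, rpow_sub hN₀]
  exact div_le_div₀ (sq_nonneg _) (hR.rpow_le_beta_sq (by simp)) (pow_pos E.beta_one_pos 2)
    (hR.beta_sq_le (Finset.mem_Icc.2 ⟨le_rfl, hN⟩))

theorem window_bounds (hR : E.CondR d s) (hN : 8 ≤ N) {α t : ℝ} (hα : 10 / 3 + 6 * s ≤ α)
    (ht : t ∈ Set.Icc ((α - 4 / 3 - 5 * s) * log N / log (E.δ 2)⁻¹)
      ((α - 4 / 3 + 6 * s) * log N / log (E.δ 2)⁻¹)) :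
    0 ≤ t ∧ 1 ≤ t * log (E.δ 2)⁻¹ ∧ E.δ 2 ^ t ≤ E.beta 1 ^ 2 / 8 ∧
      (N : ℝ) ^ (-(α - 4 / 3 + 6 * s)) ≤ E.δ 2 ^ t := by
  have hN₈ : (8 : ℝ) ≤ N := by exact_mod_cast hN
  have hN₀ : (0 : ℝ) < N := by linarith
  have h₂ : 2 ∈ Finset.Icc 1 N := Finset.mem_Icc.2 ⟨one_le_two, by omega⟩
  have h12 : E.lam 1 < E.lam 2 := by
    linarith [hR.rpow_le_gap, rpow_pos_of_pos hN₀ (-2 / 3 - s / 2)]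
  have hδ₀ : 0 < E.δ 2 := E.δ_pos h₂
  have hδ₁ : E.δ 2 < 1 :=
    (div_lt_one (pow_pos (E.lam_pos_of_mem h₂) 2)).2
      (pow_lt_pow_left₀ h12 E.lam_pos.le two_ne_zero)
  have hℓ : 0 < log (E.δ 2)⁻¹ := log_pos ((one_lt_inv₀ hδ₀).2 hδ₁)
  have hlogN : 1 / 2 ≤ log N :=
    calc (1 / 2 : ℝ) ≤ log 2 := by linarith [log_two_gt_d9]
      _ ≤ log N := log_le_log two_pos (by linarith)
  obtain ⟨hlow, hupp⟩ := ht
  rw [div_le_iff₀ hℓ] at hlow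
  rw [le_div_iff₀ hℓ] at hupp
  have hlog : 1 ≤ t * log (E.δ 2)⁻¹ := by nlinarith
  refine ⟨nonneg_of_mul_nonneg_left (by linarith) hℓ, hlog, ?_,
    (rpow_neg_le_rpow_iff hδ₀ hN₀ _ _).2 hupp⟩
  calc E.δ 2 ^ t ≤ (N : ℝ) ^ (-(α - 4 / 3 - 5 * s)) :=
        (rpow_le_rpow_neg_iff hδ₀ hN₀ _ _).2 hlow
    _ ≤ (N : ℝ) ^ (-1 - s + -1) := rpow_le_rpow_of_exponent_le (by linarith) (by linarith)
    _ = (N : ℝ) ^ (-1 - s) / N := by rw [rpow_add hN₀, rpow_neg_one, div_eq_mul_inv]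
    _ ≤ E.beta 1 ^ 2 / 8 :=
        div_le_div₀ (sq_nonneg _) (hR.rpow_le_beta_sq (by simp)) (by norm_num) hN₈

theorem rpow_le_leading_term (hR : E.CondR d s) (hs : s < 4 / 3) (hN : 2 ≤ N) {α t : ℝ}
    (hδt : (N : ℝ) ^ (-(α - 4 / 3 + 6 * s)) ≤ E.δ 2 ^ t) :
    2 * (N : ℝ) ^ (-2 / 3 - 19 * s / 2 - α) / ((1 + √d) ^ 2 + 1) ^ 4
      ≤ (1 - E.δ 2) * ((E.lam 1)⁻¹ - (E.lam 2)⁻¹) * log (E.δ 2)⁻¹ * E.δ 2 ^ t * E.ν 2 := by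
  have hN₀ : (0 : ℝ) < N := by exact_mod_cast (by omega : 0 < N)
  have hgap := hR.rpow_le_gap
  have hgap₀ : 0 ≤ E.lam 2 - E.lam 1 := (rpow_nonneg hN₀.le _).trans hgap
  have hδt₀ : 0 ≤ E.δ 2 ^ t := (rpow_nonneg hN₀.le _).trans hδt
  have hpow : (N : ℝ) ^ (-2 / 3 - 19 * s / 2 - α) =
      ((N : ℝ) ^ (-2 / 3 - s / 2 : ℝ)) ^ 3 * (N : ℝ) ^ (-(α - 4 / 3 + 6 * s)) *
        (N : ℝ) ^ (-2 * s) := by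
    rw [← rpow_natCast, ← rpow_mul hN₀.le, ← rpow_add hN₀, ← rpow_add hN₀]
    ring_nf
  calc 2 * (N : ℝ) ^ (-2 / 3 - 19 * s / 2 - α) / ((1 + √d) ^ 2 + 1) ^ 4
      = 2 * ((N : ℝ) ^ (-2 / 3 - s / 2 : ℝ)) ^ 3 / ((1 + √d) ^ 2 + 1) ^ 4 *
          (N : ℝ) ^ (-(α - 4 / 3 + 6 * s)) * (N : ℝ) ^ (-2 * s) := by rw [hpow]; ring
    _ ≤ 2 * (E.lam 2 - E.lam 1) ^ 3 / ((1 + √d) ^ 2 + 1) ^ 4 * E.δ 2 ^ t * E.ν 2 := by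
        gcongr
        exact hR.rpow_le_ν_two (by omega)
    _ ≤ _ := by
        gcongr
        · exact E.ν_nonneg 2
        · exact E.two_mul_gap_pow_three_div_le (by linarith)
            (hR.lam_le hs (Finset.mem_Icc.2 ⟨one_le_two, hN⟩))

end EigenData.CondR

theorem EIP0_deriv_bound_general (d σ α s : ℝ)
    (hσ1 : σ < 1 / 3)
    (hα : 10 / 3 + σ ≤ α)
    (hs0 : 0 < s) (hs1 : s < σ / 40) :
    ∃ C > 0, ∃ N₀ : ℕ, ∀ N : ℕ, N₀ ≤ N → ∀ E : EigenData N, E.CondR d s →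
      ∀ t ∈ Set.Icc ((α - 4 / 3 - 5 * s) * Real.log N / Real.log (E.δ 2)⁻¹)
          ((α - 4 / 3 + 6 * s) * Real.log N / Real.log (E.δ 2)⁻¹),
        DifferentiableAt ℝ E.EIP0 t ∧
          C * (N : ℝ) ^ (-11 * s - 2 / 3 - α) ≤ -deriv E.EIP0 t := by
  set K := (1 + √d) ^ 2 + 1
  refine ⟨1 / (16 * K ^ 4), by positivity, 8, fun N hN E hR t ht => ?_⟩
  have hN₁ : (1 : ℝ) ≤ N := by exact_mod_cast (by omega : 1 ≤ N)
  obtain ⟨ht₀, hlog, hsmall, hδt⟩ := hR.window_bounds hN (by linarith) ht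
  obtain ⟨hdiff, hderiv⟩ := E.neg_deriv_EIP0_ge (by omega) ht₀ hlog hsmall
  refine ⟨hdiff, le_trans ?_ hderiv⟩
  calc 1 / (16 * K ^ 4) * (N : ℝ) ^ (-11 * s - 2 / 3 - α)
      ≤ 1 / (16 * K ^ 4) * (N : ℝ) ^ (-2 / 3 - 19 * s / 2 - α) :=
        mul_le_mul_of_nonneg_left (rpow_le_rpow_of_exponent_le hN₁ (by linarith)) (by positivity)
    _ = 2 * (N : ℝ) ^ (-2 / 3 - 19 * s / 2 - α) / K ^ 4 / 32 := by field_simp; ring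
    _ ≤ _ := by
        gcongr
        exact hR.rpow_le_leading_term (by linarith) (by omega) hδt

/-- Derivative bound: given Condition R(N,s), for `t` in `L̂_α`, `E_{IP,0}` is
differentiable at `t` and `-E_{IP,0}'(t) ≥ C N^{-11s - 2/3 - α}`. -/
theorem EIP0_deriv_bound (d σ α s : ℝ)
    (hd0 : 0 < d) (hd1 : d < 1)
    (hσ0 : 0 < σ) (hσ1 : σ < 1 / 3)
    (hα : 10 / 3 + σ ≤ α)
    (hs0 : 0 < s) (hs1 : s < σ / 40) :
    ∃ C > 0, ∃ N₀ : ℕ, ∀ N : ℕ, N₀ ≤ N → ∀ E : EigenData N, E.CondR d s →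
      ∀ t ∈ Set.Icc ((α - 4 / 3 - 5 * s) * Real.log N / Real.log (E.δ 2)⁻¹)
          ((α - 4 / 3 + 6 * s) * Real.log N / Real.log (E.δ 2)⁻¹),
        DifferentiableAt ℝ E.EIP0 t ∧
          C * (N : ℝ) ^ (-11 * s - 2 / 3 - α) ≤ -deriv E.EIP0 t :=
  EIP0_deriv_bound_general d σ α s hσ1 hα hs0 hs1
end
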